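/- arXiv:math/0603328 — 11 statements merged into one kernel-verified Lean document; each statement's English description precedes it below -/
import Mathlib

section
/- Let (Y_k)_{k≥0} be a sequence of nonnegative random variables on a probability space (for instance Y_k = F(Φ(k)) for a nonnegative measurable function F and a stochastic process Φ with a fixed initial condition), and set S_n := Σ_{k=0}^{n-1} Y_k. Then the following are equivalent: (i) there exists c₀ > 0 such that limsup_{n→∞} n⁻¹ log P{S_n ≥ n c₀} < 0; (ii) there exists θ₀ > 0 such that limsup_{n→∞} n⁻¹ log E[exp(θ₀ S_n)] < ∞. -/
/-!
(ii) ⇒ (i) is the Chernoff bound `P{S n ≥ n c} ≤ e^{-θ n c} E[e^{θ S n}]`, with `c` so large that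
`θ c` beats the exponential growth rate of the moments.

(i) ⇒ (ii): cutting the range of `S n` into layers `[m c, (m + 1) c)` gives
`E[e^{θ S n}] ≤ ∑ₘ e^{θ (m + 1) c} P{S n ≥ m c}`. Since `S` is nondecreasing in `n`,
`P{S n ≥ m c} ≤ P{S m ≥ m c} ≤ e^{α m}` for `m ≥ n` large, so the terms with `m ≥ n` form a
geometric series once `θ c < -α`, while the `n` terms with `m < n` are each at most `e^{θ n c}`.
-/

open MeasureTheory ProbabilityTheory Filter ExpGrowth
open scoped ENNReal

lemma limsup_inv_mul_log_eq_expGrowthSup (u : ℕ → ℝ≥0∞) :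
    limsup (fun n : ℕ => (((n : ℝ)⁻¹ : ℝ) : EReal) * ENNReal.log (u n)) atTop =
      expGrowthSup u := by
  refine limsup_congr (Eventually.of_forall fun n => ?_)
  rw [div_eq_mul_inv, mul_comm]
  congr 1

lemma expGrowthSup_lt_top_of_eventually_le_mul_pow_add {u : ℕ → ℝ≥0∞} {b C : ℝ≥0∞}
    (hb : b ≠ ⊤) (hC : C ≠ ⊤) (h : ∀ᶠ n in atTop, u n ≤ n * b ^ n + C) : expGrowthSup u < ⊤ := by
  have hpow : expGrowthSup (fun n : ℕ => (n : ℝ≥0∞) * b ^ n) ≤ ENNReal.log (2 * b) := by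
    rw [← expGrowthSup_pow]
    refine expGrowthSup_monotone fun n => ?_
    rw [mul_pow]
    gcongr
    exact_mod_cast Nat.lt_two_pow_self.le
  have hconst : expGrowthSup (fun _ => C) ≤ 0 := by
    rw [← expGrowthSup_const (b := C + 1) (by simp) (by simpa using hC)]
    exact expGrowthSup_monotone fun n => le_self_add
  calc expGrowthSup u ≤ expGrowthSup ((fun n : ℕ => (n : ℝ≥0∞) * b ^ n) + fun _ => C) :=
        expGrowthSup_eventually_monotone (h.mono fun _ hn => hn)
    _ = expGrowthSup (fun n : ℕ => (n : ℝ≥0∞) * b ^ n) ⊔ expGrowthSup (fun _ => C) :=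
        expGrowthSup_add
    _ ≤ ENNReal.log (2 * b) ⊔ 0 := sup_le_sup hpow hconst
    _ < ⊤ := by
      refine sup_lt_iff.2 ⟨?_, EReal.zero_lt_top⟩
      simpa using ENNReal.mul_lt_top (by norm_num) hb.lt_top

lemma tsum_pow_succ_mul_le {b r : ℝ≥0∞} (hb : 1 ≤ b) {q : ℕ → ℝ≥0∞} {n : ℕ}
    (hq₁ : ∀ m < n, q m ≤ 1) (hq : ∀ m, n ≤ m → q m ≤ r ^ m) :
    ∑' m, b ^ (m + 1) * q m ≤ n * b ^ n + b * (1 - b * r)⁻¹ := by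
  have hterm (m : ℕ) : b ^ (m + 1) * q m ≤ (if m < n then b ^ n else 0) + b * (b * r) ^ m := by
    split_ifs with hm
    · refine le_add_right ?_
      calc b ^ (m + 1) * q m ≤ b ^ n * 1 := mul_le_mul' (pow_le_pow_right₀ hb hm) (hq₁ m hm)
        _ = b ^ n := mul_one _
    · calc b ^ (m + 1) * q m ≤ b ^ (m + 1) * r ^ m := by gcongr; exact hq m (not_lt.1 hm)
        _ = 0 + b * (b * r) ^ m := by ring
  calc ∑' m, b ^ (m + 1) * q m
      ≤ ∑' m, ((if m < n then b ^ n else 0) + b * (b * r) ^ m) := ENNReal.tsum_le_tsum hterm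
    _ = n * b ^ n + b * (1 - b * r)⁻¹ := by
      rw [ENNReal.tsum_add, ENNReal.tsum_mul_left, ENNReal.tsum_geometric,
        tsum_eq_sum (s := Finset.range n) fun m hm => if_neg (by simpa using hm),
        Finset.sum_ite_of_true fun m hm => Finset.mem_range.1 hm]
      simp

section

variable {Ω : Type*} {mΩ : MeasurableSpace Ω} {μ : Measure Ω}

lemma measure_ge_le_exp_mul_lintegral_exp {X : Ω → ℝ} (hX : AEMeasurable X μ) {t : ℝ}
    (ht : 0 ≤ t) (a : ℝ) :
    μ {ω | a ≤ X ω} ≤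
      ENNReal.ofReal (Real.exp (-(t * a))) * ∫⁻ ω, ENNReal.ofReal (Real.exp (t * X ω)) ∂μ := by
  set ε := ENNReal.ofReal (Real.exp (t * a))
  have hε : ENNReal.ofReal (Real.exp (-(t * a))) * ε = 1 := by
    rw [← ENNReal.ofReal_mul (Real.exp_pos _).le, ← Real.exp_add, neg_add_cancel, Real.exp_zero,
      ENNReal.ofReal_one]
  have hsub : {ω | a ≤ X ω} ⊆ {ω | ε ≤ ENNReal.ofReal (Real.exp (t * X ω))} := fun ω hω =>
    ENNReal.ofReal_le_ofReal (Real.exp_le_exp.2 (mul_le_mul_of_nonneg_left hω ht))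
  calc μ {ω | a ≤ X ω}
      = ENNReal.ofReal (Real.exp (-(t * a))) * (ε * μ {ω | a ≤ X ω}) := by
        rw [← mul_assoc, hε, one_mul]
    _ ≤ _ := by
        gcongr
        exact (mul_le_mul_right (measure_mono hsub) ε).trans
          (mul_meas_ge_le_lintegral₀ (hX.const_mul t).exp.ennreal_ofReal ε)

lemma lintegral_exp_le_tsum_pow_mul_measure {X : Ω → ℝ} (hX : Measurable X)
    (hX0 : ∀ ω, 0 ≤ X ω) {c t : ℝ} (hc : 0 < c) (ht : 0 ≤ t) :
    ∫⁻ ω, ENNReal.ofReal (Real.exp (t * X ω)) ∂μ ≤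
      ∑' m : ℕ, ENNReal.ofReal (Real.exp (t * c)) ^ (m + 1) * μ {ω | m * c ≤ X ω} := by
  have hmeas (m : ℕ) : MeasurableSet {ω | m * c ≤ X ω} := measurableSet_le measurable_const hX
  -- on the layer `m c ≤ X < (m + 1) c`, with `m = ⌊X / c⌋₊`
  have hpt (ω : Ω) : ENNReal.ofReal (Real.exp (t * X ω)) ≤
      ∑' m : ℕ, {ω | m * c ≤ X ω}.indicator
        (fun _ => ENNReal.ofReal (Real.exp (t * c)) ^ (m + 1)) ω := by
    set m := ⌊X ω / c⌋₊
    have hm : ω ∈ {ω | m * c ≤ X ω} :=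
      (le_div_iff₀ hc).1 (Nat.floor_le (div_nonneg (hX0 ω) hc.le))
    refine le_trans ?_ (ENNReal.le_tsum m)
    rw [Set.indicator_of_mem hm, ← ENNReal.ofReal_pow (Real.exp_pos _).le, ← Real.exp_nat_mul]
    refine ENNReal.ofReal_le_ofReal (Real.exp_le_exp.2 ?_)
    have := ((div_lt_iff₀ hc).1 (Nat.lt_floor_add_one (X ω / c))).le
    push_cast
    nlinarith
  calc ∫⁻ ω, ENNReal.ofReal (Real.exp (t * X ω)) ∂μ
      ≤ ∫⁻ ω, ∑' m : ℕ, {ω | m * c ≤ X ω}.indicator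
        (fun _ => ENNReal.ofReal (Real.exp (t * c)) ^ (m + 1)) ω ∂μ := lintegral_mono hpt
    _ = _ := by
      rw [lintegral_tsum fun m => (measurable_const.indicator (hmeas m)).aemeasurable]
      simp only [lintegral_indicator (hmeas _), setLIntegral_const]

theorem exists_expGrowthSup_measure_ge_lt_zero {S : ℕ → Ω → ℝ}
    (hS : ∀ n, AEMeasurable (S n) μ) {θ : ℝ} (hθ : 0 < θ)
    (h : expGrowthSup (fun n => ∫⁻ ω, ENNReal.ofReal (Real.exp (θ * S n ω)) ∂μ) < ⊤) :
    ∃ c : ℝ, 0 < c ∧ expGrowthSup (fun n : ℕ => μ {ω | n * c ≤ S n ω}) < 0 := by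
  obtain ⟨K, hK, -⟩ := EReal.exists_between_coe_real h
  set c := (|K| + 1) / θ with hc
  have hθc : θ * c = |K| + 1 := by rw [hc]; field_simp
  refine ⟨c, by positivity, ?_⟩
  calc expGrowthSup (fun n : ℕ => μ {ω | n * c ≤ S n ω})
      ≤ ((K - θ * c : ℝ) : EReal) := by
        refine Eventually.expGrowthSup_le ?_
        filter_upwards [eventually_le_exp hK] with n hn
        calc μ {ω | n * c ≤ S n ω}
            ≤ ENNReal.ofReal (Real.exp (-(θ * (n * c)))) *
                ∫⁻ ω, ENNReal.ofReal (Real.exp (θ * S n ω)) ∂μ :=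
              measure_ge_le_exp_mul_lintegral_exp (hS n) hθ.le _
          _ ≤ ENNReal.ofReal (Real.exp (-(θ * (n * c)))) * EReal.exp (K * n) := by gcongr
          _ = EReal.exp ((K - θ * c : ℝ) * n) := by
            rw [← EReal.exp_coe, ← EReal.exp_add]
            congr 1
            norm_cast
            ring
    _ < 0 := by exact_mod_cast (by linarith [le_abs_self K] : K - θ * c < 0)

theorem exists_expGrowthSup_lintegral_exp_lt_top [IsProbabilityMeasure μ] {S : ℕ → Ω → ℝ}
    (hmeas : ∀ n, Measurable (S n)) (hS0 : ∀ n ω, 0 ≤ S n ω) (hmono : ∀ ω, Monotone (S · ω))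
    {c : ℝ} (hc : 0 < c) (h : expGrowthSup (fun n : ℕ => μ {ω | n * c ≤ S n ω}) < 0) :
    ∃ θ : ℝ, 0 < θ ∧
      expGrowthSup (fun n => ∫⁻ ω, ENNReal.ofReal (Real.exp (θ * S n ω)) ∂μ) < ⊤ := by
  obtain ⟨α, hα, hα0⟩ := EReal.exists_between_coe_real h
  obtain ⟨N, hN⟩ := eventually_atTop.1 (eventually_le_exp hα)
  have hα0 : α < 0 := by exact_mod_cast hα0
  set θ := -α / (2 * c) with hθdef
  have hθ : 0 < θ := div_pos (neg_pos.2 hα0) (by positivity)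
  set b := ENNReal.ofReal (Real.exp (θ * c))
  -- `θ` is chosen so that `b * exp α = exp (α / 2) < 1`
  have hbr : b * EReal.exp α < 1 := by
    rw [show b = EReal.exp (θ * c : ℝ) from rfl, ← EReal.exp_add, EReal.exp_lt_one_iff]
    have : θ * c + α < 0 := by
      have : θ * c = -α / 2 := by rw [hθdef]; field_simp
      linarith
    exact_mod_cast this
  have hb : b ≠ ⊤ := ENNReal.ofReal_ne_top
  refine ⟨θ, hθ, expGrowthSup_lt_top_of_eventually_le_mul_pow_add hb
    (ENNReal.mul_ne_top hb (ENNReal.inv_ne_top.2 (tsub_pos_of_lt hbr).ne')) ?_⟩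
  filter_upwards [eventually_ge_atTop N] with n hn
  calc ∫⁻ ω, ENNReal.ofReal (Real.exp (θ * S n ω)) ∂μ
      ≤ ∑' m : ℕ, b ^ (m + 1) * μ {ω | m * c ≤ S n ω} :=
        lintegral_exp_le_tsum_pow_mul_measure (hmeas n) (hS0 n) hc hθ.le
    _ ≤ n * b ^ n + b * (1 - b * EReal.exp α)⁻¹ := by
      refine tsum_pow_succ_mul_le (ENNReal.one_le_ofReal.2 (Real.one_le_exp (by positivity)))
        (fun m _ => prob_le_one) fun m hm => ?_
      calc μ {ω | m * c ≤ S n ω} ≤ μ {ω | m * c ≤ S m ω} :=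
            measure_mono fun ω hω => le_trans hω (hmono ω hm)
        _ ≤ EReal.exp (α * m) := hN m (hn.trans hm)
        _ = EReal.exp α ^ m := by rw [mul_comm, EReal.exp_nmul]
end

/-- **Proposition 2.12** (weak form of Varadhan's lemma). For a sequence of nonnegative
random variables `Y k` with partial sums `S n = ∑_{k<n} Y k`, the following are equivalent:
(i) for some `c₀ > 0`, `limsup n⁻¹ log P{S n ≥ n c₀} < 0`;
(ii) for some `θ₀ > 0`, `limsup n⁻¹ log E[exp(θ₀ S n)] < ∞`. -/
theorem prop_2_12 {Ω : Type*} [MeasureSpace Ω] [IsProbabilityMeasure (ℙ : Measure Ω)]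
    (Y : ℕ → Ω → ℝ) (hYmeas : ∀ k, Measurable (Y k)) (hYnonneg : ∀ k ω, 0 ≤ Y k ω)
    (S : ℕ → Ω → ℝ) (hS : ∀ n ω, S n ω = ∑ k ∈ Finset.range n, Y k ω) :
    (∃ c₀ : ℝ, 0 < c₀ ∧
        limsup (fun n : ℕ => (((n : ℝ)⁻¹ : ℝ) : EReal) *
          ENNReal.log (ℙ {ω | (n : ℝ) * c₀ ≤ S n ω})) atTop < 0) ↔
      (∃ θ₀ : ℝ, 0 < θ₀ ∧
        limsup (fun n : ℕ => (((n : ℝ)⁻¹ : ℝ) : EReal) *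
          ENNReal.log (∫⁻ ω, ENNReal.ofReal (Real.exp (θ₀ * S n ω)))) atTop < ⊤) := by
  have hSmeas (n : ℕ) : Measurable (S n) :=
    funext (hS n) ▸ Finset.measurable_sum _ fun k _ => hYmeas k
  have hS0 (n : ℕ) (ω : Ω) : 0 ≤ S n ω :=
    hS n ω ▸ Finset.sum_nonneg fun k _ => hYnonneg k ω
  have hSmono (ω : Ω) : Monotone (S · ω) := monotone_nat_of_le_succ fun n => by
    simp only [hS, Finset.sum_range_succ, le_add_iff_nonneg_right, hYnonneg]
  simp only [limsup_inv_mul_log_eq_expGrowthSup]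
  exact ⟨fun ⟨c, hc, h⟩ => exists_expGrowthSup_lintegral_exp_lt_top hSmeas hS0 hSmono hc h,
    fun ⟨θ, hθ, h⟩ =>
      exists_expGrowthSup_measure_ge_lt_zero (fun n => (hSmeas n).aemeasurable) hθ h⟩
end

section
/- Let X be a measurable space, Q a nonnegative (sub-probability or general s-finite) kernel on X, v : X → [0,∞] measurable, and δ ∈ (0,1] such that ∫ v(y) Q(x,dy) ≤ (1−δ) v(x) for every x ∈ X. Then Σ_{k=0}^{∞} ∫ v(y) Q^k(x,dy) ≤ δ⁻¹ v(x) for every x ∈ X. -/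
open MeasureTheory ProbabilityTheory Filter
open scoped ENNReal

/-- Geometric potential-kernel bound: if a nonnegative kernel `Q` satisfies
`Q v ≤ (1 − δ) v` pointwise for some `δ ∈ (0,1]`, then
`∑_k Q^k v ≤ δ⁻¹ v` pointwise, where `Q^k` is the `k`-fold iterate of `Q`. -/
theorem geometric_potential_bound {X : Type*} [MeasurableSpace X]
    (Q : Kernel X X)
    (v : X → ℝ≥0∞) (hv : Measurable v)
    (δ : ℝ≥0∞) (hδ0 : 0 < δ) (hδ1 : δ ≤ 1)
    (hdrift : ∀ x, ∫⁻ y, v y ∂(Q x) ≤ (1 - δ) * v x) :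
    ∀ x : X, ∑' k : ℕ, ∫⁻ y, v y ∂(((fun K => Q ∘ₖ K)^[k] Kernel.id) x) ≤ δ⁻¹ * v x := by
  intro x
  have key : ∀ k : ℕ, ∀ x : X,
      ∫⁻ y, v y ∂(((fun K => Q ∘ₖ K)^[k] Kernel.id) x) ≤ (1 - δ) ^ k * v x := by
    intro k
    induction k with
    | zero =>
      intro x
      simp [Kernel.id, Kernel.deterministic_apply, lintegral_dirac' _ hv]
    | succ n ih =>
      intro x
      rw [Function.iterate_succ_apply']
      rw [Kernel.lintegral_comp _ _ _ hv]
      calc ∫⁻ y, ∫⁻ z, v z ∂(Q y) ∂(((fun K => Q ∘ₖ K)^[n] Kernel.id) x)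
          ≤ ∫⁻ y, (1 - δ) * v y ∂(((fun K => Q ∘ₖ K)^[n] Kernel.id) x) :=
            lintegral_mono fun y => hdrift y
        _ = (1 - δ) * ∫⁻ y, v y ∂(((fun K => Q ∘ₖ K)^[n] Kernel.id) x) :=
            lintegral_const_mul _ hv
        _ ≤ (1 - δ) * ((1 - δ) ^ n * v x) := by gcongr; exact ih x
        _ = (1 - δ) ^ (n + 1) * v x := by ring
  calc ∑' k : ℕ, ∫⁻ y, v y ∂(((fun K => Q ∘ₖ K)^[k] Kernel.id) x)
      ≤ ∑' k : ℕ, (1 - δ) ^ k * v x := ENNReal.tsum_le_tsum fun k => key k x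
    _ = (∑' k : ℕ, (1 - δ) ^ k) * v x := ENNReal.tsum_mul_right
    _ = (1 - (1 - δ))⁻¹ * v x := by rw [ENNReal.tsum_geometric]
    _ = δ⁻¹ * v x := by rw [ENNReal.sub_sub_cancel ENNReal.one_ne_top hδ1]
end

section
/- Let D be a real-valued random variable with E[D] = −δ for some δ > 0 and E[D²] < ∞, and set σ² := Var(D). Define V(x) := 1 + (2δ)⁻¹(x² + δx) for x ≥ 0. Then for every x ≥ 0, E[V(max(x + D, 0))] = V(x) − x + R(x), where R(x) := (2δ)⁻¹σ² − (2δ)⁻¹ E[((x+D)² + δ(x+D)) · 1{x + D < 0}], and moreover sup_{x ≥ 0} |R(x)| < ∞. -/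
/-!
Since `{max y 0, min y 0} = {y, 0}` and `V 0 = 1`, the reflection changes `V (x + D)` only by
`(2δ)⁻¹ q (min (x + D) 0)` with `q y = y² + δ y`, which is the truncated term in `R`.
The untruncated expectation `E[V (x + D)]` is a quadratic in `x` whose coefficients are given by
the mean `-δ` and the variance of `D`; this yields `V x - x + (2δ)⁻¹ σ²`. For `x ≥ 0` one has
`|min (x + D) 0| ≤ |D|`, so the truncated term is dominated by `D² + δ |D|`, uniformly in `x`.
-/

open MeasureTheory ProbabilityTheory

lemma comp_max_add_comp_min (f : ℝ → ℝ) (a b : ℝ) :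
    f (max a b) + f (min a b) = f a + f b := by
  rcases le_total a b with h | h <;> simp [h, add_comm]

lemma ite_neg_eq_comp_min_zero {f : ℝ → ℝ} (hf : f 0 = 0) (y : ℝ) :
    (if y < 0 then f y else 0) = f (min y 0) := by
  split_ifs with h
  · rw [min_eq_left h.le]
  · rw [min_eq_right (not_lt.1 h), hf]

lemma abs_min_add_zero_le {x : ℝ} (hx : 0 ≤ x) (d : ℝ) : |min (x + d) 0| ≤ |d| :=
  abs_le.2 ⟨le_min (by linarith [neg_abs_le d]) (neg_nonpos.2 (abs_nonneg d)),
    (min_le_right _ _).trans (abs_nonneg d)⟩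

lemma abs_sq_add_mul_le {δ m d : ℝ} (hδ : 0 ≤ δ) (h : |m| ≤ |d|) :
    |m ^ 2 + δ * m| ≤ d ^ 2 + δ * |d| :=
  calc |m ^ 2 + δ * m| ≤ |m| ^ 2 + δ * |m| :=
        (abs_add_le _ _).trans_eq (by rw [abs_mul, abs_of_nonneg hδ, abs_pow])
    _ ≤ d ^ 2 + δ * |d| := by
        rw [← sq_abs d]; gcongr

section

variable {Ω : Type*} [MeasurableSpace Ω] {μ : Measure Ω} [IsProbabilityMeasure μ] {X : Ω → ℝ}

lemma integrable_const_add_sq_add_mul (hX : MemLp X 2 μ) (x c : ℝ) :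
    Integrable (fun ω => (x + X ω) ^ 2 + c * (x + X ω)) μ := by
  have hY : MemLp (fun ω => x + X ω) 2 μ := (memLp_const x).add hX
  exact hY.integrable_sq.add ((hY.integrable one_le_two).const_mul c)

lemma integral_const_add_sq_add_mul (hX : MemLp X 2 μ) (x c : ℝ) :
    ∫ ω, ((x + X ω) ^ 2 + c * (x + X ω)) ∂μ
      = (x + μ[X]) ^ 2 + variance X μ + c * (x + μ[X]) := by
  have hX1 : Integrable X μ := hX.integrable one_le_two
  have hexp : (fun ω => (x + X ω) ^ 2 + c * (x + X ω))
      = fun ω => (x ^ 2 + c * x) + ((2 * x + c) * X ω + X ω ^ 2) := by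
    ext ω; ring
  have hlin : Integrable (fun ω => (2 * x + c) * X ω + X ω ^ 2) μ :=
    (hX1.const_mul _).add hX.integrable_sq
  rw [variance_eq_sub hX, hexp, integral_add (integrable_const _) hlin,
    integral_add (hX1.const_mul _) hX.integrable_sq, integral_const_mul]
  simp only [integral_const, probReal_univ, smul_eq_mul, one_mul, Pi.pow_apply]
  ring

variable {δ x : ℝ}

lemma norm_sq_add_mul_min_zero_le (hδ : 0 ≤ δ) (hx : 0 ≤ x) (d : ℝ) :
    ‖min (x + d) 0 ^ 2 + δ * min (x + d) 0‖ ≤ d ^ 2 + δ * |d| :=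
  abs_sq_add_mul_le hδ (abs_min_add_zero_le hx d)

lemma integrable_sq_add_mul_min_zero (hX : MemLp X 2 μ) (hδ : 0 ≤ δ) (hx : 0 ≤ x) :
    Integrable (fun ω => min (x + X ω) 0 ^ 2 + δ * min (x + X ω) 0) μ :=
  Integrable.mono' (hX.integrable_sq.add ((hX.integrable one_le_two).abs.const_mul δ))
    ((by fun_prop : Continuous fun d : ℝ => min (x + d) 0 ^ 2 + δ * min (x + d) 0)
      |>.comp_aestronglyMeasurable hX.aestronglyMeasurable)
    (ae_of_all _ fun ω => norm_sq_add_mul_min_zero_le hδ hx (X ω))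

lemma abs_integral_sq_add_mul_min_zero_le (hX : MemLp X 2 μ) (hδ : 0 ≤ δ) (hx : 0 ≤ x) :
    |∫ ω, (min (x + X ω) 0 ^ 2 + δ * min (x + X ω) 0) ∂μ| ≤ ∫ ω, (X ω ^ 2 + δ * |X ω|) ∂μ :=
  norm_integral_le_of_norm_le (hX.integrable_sq.add ((hX.integrable one_le_two).abs.const_mul δ))
    (ae_of_all _ fun ω => norm_sq_add_mul_min_zero_le hδ hx (X ω))

end

theorem reflected_rw_drift_identity_general {Ω : Type*} [MeasureSpace Ω]
    [IsProbabilityMeasure (ℙ : Measure Ω)]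
    (D : Ω → ℝ) (hDint : Integrable D)
    (δ : ℝ) (hδ : 0 < δ) (hmean : (∫ ω, D ω) = -δ)
    (hDsq : Integrable (fun ω => (D ω) ^ 2))
    (σ2 : ℝ) (hσ2 : σ2 = variance D ℙ)
    (V : ℝ → ℝ) (hVdef : ∀ x, V x = 1 + (2 * δ)⁻¹ * (x ^ 2 + δ * x))
    (R : ℝ → ℝ)
    (hRdef : ∀ x, R x = (2 * δ)⁻¹ * σ2 -
      (2 * δ)⁻¹ * ∫ ω, (if x + D ω < 0 then (x + D ω) ^ 2 + δ * (x + D ω) else 0)) :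
    (∀ x : ℝ, 0 ≤ x → (∫ ω, V (max (x + D ω) 0)) = V x - x + R x) ∧
      ∃ M : ℝ, ∀ x : ℝ, 0 ≤ x → |R x| ≤ M := by
  have hX : MemLp D 2 ℙ := (memLp_two_iff_integrable_sq hDint.aestronglyMeasurable).2 hDsq
  have hR (x : ℝ) : R x = (2 * δ)⁻¹ * (σ2 -
      ∫ ω, (min (x + D ω) 0 ^ 2 + δ * min (x + D ω) 0)) := by
    rw [hRdef, mul_sub]
    congr 2
    exact integral_congr_ae (ae_of_all _ fun ω =>
      ite_neg_eq_comp_min_zero (f := fun y => y ^ 2 + δ * y) (by simp) (x + D ω))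
  have hVmax (y : ℝ) : V (max y 0)
      = 1 + (2 * δ)⁻¹ * ((y ^ 2 + δ * y) - (min y 0 ^ 2 + δ * min y 0)) := by
    have := comp_max_add_comp_min V y 0
    simp only [hVdef] at this ⊢
    linear_combination this
  refine ⟨fun x hx => ?_, ⟨(2 * δ)⁻¹ * (|σ2| + ∫ ω, (D ω ^ 2 + δ * |D ω|)), fun x hx => ?_⟩⟩
  · simp_rw [hVmax]
    have hquad := integrable_const_add_sq_add_mul hX x δ
    have htrunc := integrable_sq_add_mul_min_zero hX hδ.le hx
    rw [integral_add (integrable_const _) ?_, integral_const_mul,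
      integral_sub hquad htrunc,
      integral_const_add_sq_add_mul hX, hR, hVdef, ← hσ2, hmean, integral_const, probReal_univ,
      one_smul]
    · field_simp
      ring
    · exact (hquad.sub htrunc).const_mul _
  · rw [hR, abs_mul, abs_of_pos (by positivity)]
    gcongr
    exact (abs_sub _ _).trans (add_le_add_right (abs_integral_sq_add_mul_min_zero_le hX hδ.le hx) _)

/-- **Proposition 3.2(i), identity (35).** For the reflected random walk with increment `D`
satisfying `E[D] = −δ < 0` and `E[D²] < ∞`, the Lyapunov function
`V(x) = 1 + (2δ)⁻¹(x² + δx)` satisfies `PV(x) = V(x) − x + R(x)` with `R` bounded on `[0,∞)`,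
where `R(x) = (2δ)⁻¹σ² − (2δ)⁻¹ E[((x+D)² + δ(x+D)) 1{x+D < 0}]` and `σ² = Var(D)`. -/
theorem reflected_rw_drift_identity {Ω : Type*} [MeasureSpace Ω]
    [IsProbabilityMeasure (ℙ : Measure Ω)]
    (D : Ω → ℝ) (hD : Measurable D) (hDint : Integrable D)
    (δ : ℝ) (hδ : 0 < δ) (hmean : (∫ ω, D ω) = -δ)
    (hDsq : Integrable (fun ω => (D ω) ^ 2))
    (σ2 : ℝ) (hσ2 : σ2 = variance D ℙ)
    (V : ℝ → ℝ) (hVdef : ∀ x, V x = 1 + (2 * δ)⁻¹ * (x ^ 2 + δ * x))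
    (R : ℝ → ℝ)
    (hRdef : ∀ x, R x = (2 * δ)⁻¹ * σ2 -
      (2 * δ)⁻¹ * ∫ ω, (if x + D ω < 0 then (x + D ω) ^ 2 + δ * (x + D ω) else 0)) :
    (∀ x : ℝ, 0 ≤ x → (∫ ω, V (max (x + D ω) 0)) = V x - x + R x) ∧
      ∃ M : ℝ, ∀ x : ℝ, 0 ≤ x → |R x| ≤ M :=
  reflected_rw_drift_identity_general D hDint δ hδ hmean hDsq σ2 hσ2 V hVdef R hRdef
end

section
/- Let D be a real-valued random variable with E[D] = −δ for some δ > 0 and E[D²] < ∞, and define V(x) := 1 + (2δ)⁻¹(x² + δx) and W(x) := 1 + x/2 for x ≥ 0. Then there exist constants b < ∞ and c ∈ [0,∞) such that for every x ≥ 0, E[V(max(x + D, 0))] ≤ V(x) − W(x) + b·1_{[0,c]}(x). -/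
open MeasureTheory ProbabilityTheory Filter
open scoped ENNReal

/-- **Proposition 3.2(i), drift condition (V3).** For the reflected random walk with
increment `D` satisfying `E[D] = −δ < 0` and `E[D²] < ∞`, the Lyapunov drift condition
holds with `V(x) = 1 + (2δ)⁻¹(x² + δx)`, `W(x) = 1 + x/2`, and `C = [0,c]`:
there are `b < ∞` and `c ≥ 0` with `E[V(max(x+D,0))] ≤ V(x) − W(x) + b·1_{[0,c]}(x)`
for all `x ≥ 0`. -/
theorem reflected_rw_drift_V3 {Ω : Type*} [MeasureSpace Ω]
    [IsProbabilityMeasure (ℙ : Measure Ω)]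
    (D : Ω → ℝ) (hD : Measurable D) (hDint : Integrable D)
    (δ : ℝ) (hδ : 0 < δ) (hmean : (∫ ω, D ω) = -δ)
    (hDsq : Integrable (fun ω => (D ω) ^ 2))
    (V W : ℝ → ℝ) (hVdef : ∀ x, V x = 1 + (2 * δ)⁻¹ * (x ^ 2 + δ * x))
    (hWdef : ∀ x, W x = 1 + x / 2) :
    ∃ b c : ℝ, 0 ≤ c ∧ ∀ x : ℝ, 0 ≤ x →
      (∫ ω, V (max (x + D ω) 0)) ≤
        V x - W x + Set.indicator (Set.Icc (0 : ℝ) c) (fun _ => b) x := by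
  set m2 := ∫ ω, (D ω)^2 with hm2
  set K := (2*δ)⁻¹ * (m2 - 3*δ^2/4) with hK
  refine ⟨max 0 (1+K), max 0 (2*(1+K)), le_max_left _ _, ?_⟩
  intro x hx
  have hδ2 : (0:ℝ) < (2*δ)⁻¹ := by positivity
  set c₀ := 1 + (2*δ)⁻¹*(x^2+δ*x+δ^2/4) with hc₀
  set c₁ := (2*δ)⁻¹*(2*x+δ) with hc₁
  have hint : Integrable (fun ω => c₀ + c₁ * D ω + (2*δ)⁻¹ * (D ω)^2) :=
    ((integrable_const _).add (hDint.const_mul _)).add (hDsq.const_mul _)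
  have hle : (∫ ω, V (max (x + D ω) 0)) ≤
      ∫ ω, (c₀ + c₁ * D ω + (2*δ)⁻¹ * (D ω)^2) := by
    refine integral_mono_of_nonneg (Filter.Eventually.of_forall fun ω => ?_) hint
      (Filter.Eventually.of_forall fun ω => ?_)
    · simp only [Pi.zero_apply]
      rw [hVdef]
      have h1 : 0 ≤ max (x + D ω) 0 := le_max_right _ _
      have h2 : 0 ≤ (max (x + D ω) 0)^2 + δ * max (x + D ω) 0 :=
        add_nonneg (sq_nonneg _) (mul_nonneg hδ.le h1)
      nlinarith [mul_nonneg hδ2.le h2]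
    · dsimp only
      rw [hVdef]
      set z := x + D ω with hz
      have hy2 : (max z 0)^2 + δ*(max z 0) ≤ z^2 + δ*z + δ^2/4 := by
        rcases le_or_gt z 0 with h|h
        · rw [max_eq_right h]; nlinarith [sq_nonneg (z + δ/2)]
        · rw [max_eq_left h.le]; nlinarith [sq_nonneg δ]
      have heq : c₀ + c₁ * D ω + (2*δ)⁻¹ * (D ω)^2
          = 1 + (2*δ)⁻¹ * (z^2 + δ*z + δ^2/4) := by
        rw [hc₀, hc₁, hz]; ring
      rw [heq]
      have := mul_le_mul_of_nonneg_left hy2 hδ2.le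
      linarith
  have i0 : Integrable (fun _ : Ω => c₀) := integrable_const _
  have i1 : Integrable (fun ω => c₁ * D ω) := hDint.const_mul _
  have i2 : Integrable (fun ω => (2*δ)⁻¹ * (D ω)^2) := hDsq.const_mul _
  have i01 : Integrable (fun ω => c₀ + c₁ * D ω) := i0.add i1
  have hval : (∫ ω, (c₀ + c₁ * D ω + (2*δ)⁻¹ * (D ω)^2))
      = c₀ + c₁ * (-δ) + (2*δ)⁻¹ * m2 := by
    rw [integral_add i01 i2, integral_add i0 i1, integral_const_mul, integral_const_mul,
      integral_const, hmean]
    simp [hm2]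
  rw [hval] at hle
  have hVW : V x - W x = (2*δ)⁻¹ * x^2 := by
    rw [hVdef, hWdef]
    field_simp
    ring
  have hkey : c₀ + c₁ * (-δ) + (2*δ)⁻¹ * m2 = (2*δ)⁻¹ * x^2 + (1 - x/2 + K) := by
    rw [hc₀, hc₁, hK]
    field_simp
    ring
  rw [hVW]
  rcases le_or_gt x (max 0 (2*(1+K))) with h|h
  · rw [Set.indicator_of_mem (Set.mem_Icc.mpr ⟨hx, h⟩)]
    have hb : 1 + K ≤ max 0 (1+K) := le_max_right _ _
    linarith [hle, hkey.le]
  · rw [Set.indicator_of_notMem (Set.notMem_Icc_of_gt h)]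
    have h2 : 2*(1+K) ≤ max 0 (2*(1+K)) := le_max_right _ _
    linarith [hle, hkey.le]
end

section
/- Let (D(k))_{k≥1} be an i.i.d. sequence of real-valued random variables with δ := −E[D(1)] > 0, E[D(1)²] < ∞, and P{D(1) > 0} > 0. For r > 0 and x > 0, let Φ^r be the reflected random walk started at Φ^r(0) = r·x, i.e., Φ^r(k+1) = max(Φ^r(k) + D(k+1), 0), and let τ₀^r := inf{k ≥ 1 : Φ^r(k) = 0} be the first return time to the origin. Then E[τ₀^r] < ∞ for every r, and lim_{r→∞} r⁻¹ E[τ₀^r] = δ⁻¹ x. -/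
/-!
Until it first hits `0`, the reflected walk started at `c = r x` coincides with the free walk
`S k = c + D 1 + ⋯ + D k`, so `τ₀ = ∑ₖ 1{S 1, …, S k > 0}` and `E τ₀ = ∑ₖ P{S 1, …, S k > 0}`.
The event `{S 1, …, S k > 0}` is determined by `D 1, …, D k`, hence independent of `D (k + 1)`;
this gives Wald's identity `E ∑_{k < τ₀} g (D (k + 1)) = E g (D 1) · E τ₀` for every `g ≥ 0`,
and its truncations at `τ₀ ∧ n`. We apply it to `D⁺ = ENNReal.ofReal D` and
`D⁻ = ENNReal.ofReal (-D)` separately, so that only monotone convergence is needed.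
Since `S τ₀ ≤ 0`, it yields `δ E τ₀ ≥ c`. Conversely `S (τ₀ - 1) > 0` gives
`S (τ₀ ∧ n) ≥ -M - (-D τ₀ - M)⁺`, whence `E τ₀ ≤ (c + M) / (δ - E (-D 1 - M)⁺)`; letting first
`c → ∞` and then `M → ∞` gives the limit.
-/

open MeasureTheory ProbabilityTheory Filter Finset Topology
open scoped ENNReal

theorem iInf_natCast_eq_tsum_indicator (P : ℕ → Prop) :
    ⨅ (k : ℕ) (_ : P k), (k : ℝ≥0∞) = ∑' k, {k | ∀ j ≤ k, ¬P j}.indicator 1 k := by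
  by_cases h : ∃ k, P k
  · classical
    have hset : {k | ∀ j ≤ k, ¬P j} = ↑(range (Nat.find h)) := by
      ext k; simp [Nat.lt_find_iff]
    rw [hset, tsum_eq_sum (s := range (Nat.find h)) fun k hk => Set.indicator_of_notMem hk _,
      sum_indicator_subset _ subset_rfl]
    simp only [Pi.one_apply, sum_const, card_range, nsmul_eq_mul, mul_one]
    exact le_antisymm (iInf₂_le _ (Nat.find_spec h))
      (le_iInf₂ fun k hk => Nat.cast_le.2 (Nat.find_min' h hk))
  · push Not at h
    simp [h]

namespace ENNReal

theorem sum_ofReal_neg_eq {ι : Type*} (s : Finset ι) (x : ι → ℝ) :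
    ∑ i ∈ s, ENNReal.ofReal (-x i)
      = ENNReal.ofReal ((∑ i ∈ s, ENNReal.ofReal (x i)).toReal - ∑ i ∈ s, x i) := by
  rw [← ofReal_toReal (sum_ne_top.2 fun _ _ => ofReal_ne_top)]
  simp only [toReal_sum fun _ _ => ofReal_ne_top, toReal_ofReal', ← sum_sub_distrib]
  congr 1
  refine sum_congr rfl fun i _ => ?_
  linarith [max_zero_sub_max_neg_zero_eq_self (x i)]

theorem sum_ofReal_neg_le {ι : Type*} (s : Finset ι) (x : ι → ℝ) {R : ℝ}
    (h : -∑ i ∈ s, x i ≤ R) :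
    ∑ i ∈ s, ENNReal.ofReal (-x i) ≤ ENNReal.ofReal R + ∑ i ∈ s, ENNReal.ofReal (x i) := by
  have hfin : ∑ i ∈ s, ENNReal.ofReal (x i) ≠ ⊤ := sum_ne_top.2 fun _ _ => ofReal_ne_top
  calc ∑ i ∈ s, ENNReal.ofReal (-x i)
      ≤ ENNReal.ofReal (R + (∑ i ∈ s, ENNReal.ofReal (x i)).toReal) := by
        rw [sum_ofReal_neg_eq]; exact ofReal_le_ofReal (by linarith)
    _ ≤ _ := by grw [ofReal_add_le, ofReal_toReal hfin]

theorem ofReal_add_sum_le {ι : Type*} (s : Finset ι) (x : ι → ℝ) {R : ℝ} (hR : 0 ≤ R)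
    (h : R ≤ -∑ i ∈ s, x i) :
    ENNReal.ofReal R + ∑ i ∈ s, ENNReal.ofReal (x i) ≤ ∑ i ∈ s, ENNReal.ofReal (-x i) := by
  have hfin : ∑ i ∈ s, ENNReal.ofReal (x i) ≠ ⊤ := sum_ne_top.2 fun _ _ => ofReal_ne_top
  rw [sum_ofReal_neg_eq, ← ofReal_toReal hfin, toReal_ofReal toReal_nonneg,
    ← ofReal_add hR toReal_nonneg]
  exact ofReal_le_ofReal (by linarith)

end ENNReal

theorem tendsto_lintegral_ofReal_sub_natCast {α : Type*} [MeasurableSpace α] {μ : Measure α}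
    {f : α → ℝ} (hf : Measurable f) (hfin : ∫⁻ x, ENNReal.ofReal (f x) ∂μ ≠ ⊤) :
    Tendsto (fun n : ℕ => ∫⁻ x, ENNReal.ofReal (f x - n) ∂μ) atTop (𝓝 0) := by
  have hlim : ∀ x, Tendsto (fun n : ℕ => ENNReal.ofReal (f x - n)) atTop (𝓝 0) := fun x =>
    tendsto_atTop_of_eventually_const (i₀ := ⌈f x⌉₊) fun n hn =>
      ENNReal.ofReal_eq_zero.2 (by linarith [Nat.le_ceil (f x), (Nat.cast_le (α := ℝ)).2 hn])
  simpa using tendsto_lintegral_of_dominated_convergence (μ := μ) (f := 0)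
    (fun x => ENNReal.ofReal (f x)) (fun n => by fun_prop)
    (fun n => ae_of_all _ fun x => ENNReal.ofReal_le_ofReal (by linarith [n.cast_nonneg (α := ℝ)]))
    hfin (ae_of_all _ hlim)

theorem tendsto_of_lower_bound_of_upper_bounds {α β γ : Type*} [TopologicalSpace γ]
    [LinearOrder γ] [OrderTopology γ] {l : Filter α} {l' : Filter β} [l'.NeBot] {f : α → γ}
    {L : γ} {u : β → α → γ} {U : β → γ} (hlow : ∀ᶠ r in l, L ≤ f r)
    (hup : ∀ᶠ M in l', ∀ᶠ r in l, f r ≤ u M r) (hu : ∀ M, Tendsto (u M) l (𝓝 (U M)))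
    (hU : Tendsto U l' (𝓝 L)) : Tendsto f l (𝓝 L) := by
  refine tendsto_order.2 ⟨fun a ha => hlow.mono fun r hr => ha.trans_le hr, fun b hb => ?_⟩
  obtain ⟨M, hM, hUM⟩ := (hup.and (hU.eventually (gt_mem_nhds hb))).exists
  filter_upwards [hM, (hu M).eventually (gt_mem_nhds hUM)] with r h1 h2 using h1.trans_lt h2

namespace ReflectedRandomWalk

variable {Ω : Type*} (D : ℕ → Ω → ℝ) (c : ℝ)

def freeWalk (k : ℕ) (ω : Ω) : ℝ := c + ∑ i ∈ range k, D (i + 1) ω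

/-- The event `{τ₀ > k}`. -/
def survivalEvent (k : ℕ) : Set Ω := {ω | ∀ j ∈ Icc 1 k, 0 < freeWalk D c j ω}

variable {D c}

@[simp] theorem freeWalk_zero (ω : Ω) : freeWalk D c 0 ω = c := by simp [freeWalk]

theorem freeWalk_succ (k : ℕ) (ω : Ω) :
    freeWalk D c (k + 1) ω = freeWalk D c k ω + D (k + 1) ω := by
  simp [freeWalk, sum_range_succ, add_assoc]

@[simp] theorem survivalEvent_zero : survivalEvent D c 0 = Set.univ := by
  ext; simp [survivalEvent]

theorem mem_survivalEvent_succ {k : ℕ} {ω : Ω} :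
    ω ∈ survivalEvent D c (k + 1) ↔ ω ∈ survivalEvent D c k ∧ 0 < freeWalk D c (k + 1) ω := by
  simp only [survivalEvent, Set.mem_ofPred_eq, mem_Icc]
  refine ⟨fun h => ⟨fun j hj => h j ⟨hj.1, by omega⟩, h _ ⟨by omega, le_rfl⟩⟩,
    fun h j hj => ?_⟩
  rcases hj.2.lt_or_eq with hlt | rfl
  exacts [h.1 j ⟨hj.1, by omega⟩, h.2]

theorem survivalEvent_antitone : Antitone (survivalEvent D c) :=
  fun _ _ hkl _ hω j hj => hω j (mem_Icc.2 ⟨(mem_Icc.1 hj).1, (mem_Icc.1 hj).2.trans hkl⟩)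

theorem freeWalk_pos_of_mem_survivalEvent (hc : 0 < c) {k : ℕ} {ω : Ω}
    (hω : ω ∈ survivalEvent D c k) : 0 < freeWalk D c k ω := by
  cases k with
  | zero => simpa using hc
  | succ k => exact (mem_survivalEvent_succ.1 hω).2

theorem mem_survivalEvent_iff_lt_find {ω : Ω} (h : ∃ j, 1 ≤ j ∧ freeWalk D c j ω ≤ 0) (k : ℕ) :
    ω ∈ survivalEvent D c k ↔ k < Nat.find h := by
  simp only [Nat.lt_find_iff, survivalEvent, Set.mem_ofPred_eq, mem_Icc, not_and, not_le]
  exact ⟨fun h j hj h1 => h j ⟨h1, hj⟩, fun h j hj => h j hj.2 hj.1⟩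

section Reflected

variable {Φ : ℕ → ℝ} {ω : Ω}

theorem eq_freeWalk_of_mem_survivalEvent (hΦ0 : Φ 0 = c)
    (hΦstep : ∀ k, Φ (k + 1) = max (Φ k + D (k + 1) ω) 0) {k : ℕ} (hω : ω ∈ survivalEvent D c k) :
    Φ k = freeWalk D c k ω := by
  induction k with
  | zero => simpa using hΦ0
  | succ k ih =>
    obtain ⟨hk, hpos⟩ := mem_survivalEvent_succ.1 hω
    rw [hΦstep, ih hk, ← freeWalk_succ, max_eq_left hpos.le]

theorem forall_ne_zero_iff_mem_survivalEvent (hΦ0 : Φ 0 = c)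
    (hΦstep : ∀ k, Φ (k + 1) = max (Φ k + D (k + 1) ω) 0) (k : ℕ) :
    (∀ j ≤ k, ¬(1 ≤ j ∧ Φ j = 0)) ↔ ω ∈ survivalEvent D c k := by
  induction k with
  | zero => simp
  | succ k ih =>
    have hsplit : (∀ j ≤ k + 1, ¬(1 ≤ j ∧ Φ j = 0)) ↔
        (∀ j ≤ k, ¬(1 ≤ j ∧ Φ j = 0)) ∧ Φ (k + 1) ≠ 0 := by
      refine ⟨fun h => ⟨fun j hj => h j (by omega), fun h0 => h _ le_rfl ⟨by omega, h0⟩⟩,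
        fun h j hj => ?_⟩
      rcases hj.lt_or_eq with hlt | rfl
      exacts [h.1 j (by omega), fun h' => h.2 h'.2]
    rw [hsplit, ih, mem_survivalEvent_succ, and_congr_right_iff]
    intro hω
    rw [hΦstep, eq_freeWalk_of_mem_survivalEvent hΦ0 hΦstep hω, ← freeWalk_succ]
    simp

theorem iInf_eq_tsum_indicator_survivalEvent (hΦ0 : Φ 0 = c)
    (hΦstep : ∀ k, Φ (k + 1) = max (Φ k + D (k + 1) ω) 0) :
    ⨅ (k : ℕ) (_ : 1 ≤ k ∧ Φ k = 0), (k : ℝ≥0∞) = ∑' k, (survivalEvent D c k).indicator 1 ω := by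
  rw [iInf_natCast_eq_tsum_indicator]
  congr! 2 with k
  simp only [forall_ne_zero_iff_mem_survivalEvent hΦ0 hΦstep]
  rfl

end Reflected

theorem tsum_mul_indicator_survivalEvent {ω : Ω} (h : ∃ j, 1 ≤ j ∧ freeWalk D c j ω ≤ 0)
    (f : ℕ → ℝ≥0∞) :
    ∑' k, f k * (survivalEvent D c k).indicator 1 ω = ∑ k ∈ range (Nat.find h), f k := by
  rw [tsum_eq_sum (s := range (Nat.find h)) fun k hk => ?_]
  · refine sum_congr rfl fun k hk => ?_
    rw [Set.indicator_of_mem ((mem_survivalEvent_iff_lt_find h k).2 (mem_range.1 hk)),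
      Pi.one_apply, mul_one]
  · rw [Set.indicator_of_notMem (by rwa [mem_survivalEvent_iff_lt_find h, ← mem_range]),
      mul_zero]

theorem ofReal_add_tsum_mul_indicator_survivalEvent_le (hc : 0 ≤ c) {ω : Ω}
    (h : ∃ j, 1 ≤ j ∧ freeWalk D c j ω ≤ 0) :
    ENNReal.ofReal c + ∑' k, ENNReal.ofReal (D (k + 1) ω) * (survivalEvent D c k).indicator 1 ω
      ≤ ∑' k, ENNReal.ofReal (-D (k + 1) ω) * (survivalEvent D c k).indicator 1 ω := by
  rw [tsum_mul_indicator_survivalEvent h, tsum_mul_indicator_survivalEvent h]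
  refine ENNReal.ofReal_add_sum_le _ _ hc ?_
  have hfind := (Nat.find_spec h).2
  rw [freeWalk] at hfind
  linarith

theorem sum_ofReal_neg_mul_indicator_survivalEvent_le (hc : 0 < c) (M : ℝ) (ω : Ω) (n : ℕ) :
    ∑ k ∈ range n, ENNReal.ofReal (-D (k + 1) ω) * (survivalEvent D c k).indicator 1 ω ≤
      ENNReal.ofReal c + ENNReal.ofReal M + ∑ k ∈ range n,
        (ENNReal.ofReal (D (k + 1) ω) + ENNReal.ofReal (-D (k + 1) ω - M)) *
          (survivalEvent D c k).indicator 1 ω := by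
  induction n with
  | zero => simp
  | succ n ih =>
    by_cases hω : ω ∈ survivalEvent D c n
    swap
    · simpa only [sum_range_succ, Set.indicator_of_notMem hω, mul_zero, add_zero] using ih
    have hsum (f : ℕ → ℝ≥0∞) :
        ∑ k ∈ range (n + 1), f k * (survivalEvent D c k).indicator 1 ω = ∑ k ∈ range (n + 1), f k :=
      sum_congr rfl fun k hk => by
        rw [Set.indicator_of_mem (survivalEvent_antitone (Nat.lt_succ_iff.1 (mem_range.1 hk)) hω),
          Pi.one_apply, mul_one]
    -- `S n > 0`, so the walk cannot end up lower than `D (n + 1)`.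
    have hS : -∑ k ∈ range (n + 1), D (k + 1) ω ≤ c + M + (-D (n + 1) ω - M) := by
      have := freeWalk_pos_of_mem_survivalEvent hc hω
      simp only [freeWalk, sum_range_succ] at this ⊢
      linarith
    rw [hsum, hsum, sum_add_distrib]
    calc ∑ k ∈ range (n + 1), ENNReal.ofReal (-D (k + 1) ω)
        ≤ ENNReal.ofReal (c + M + (-D (n + 1) ω - M)) +
            ∑ k ∈ range (n + 1), ENNReal.ofReal (D (k + 1) ω) := ENNReal.sum_ofReal_neg_le _ _ hS
      _ ≤ ENNReal.ofReal c + ENNReal.ofReal M + ENNReal.ofReal (-D (n + 1) ω - M) +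
            ∑ k ∈ range (n + 1), ENNReal.ofReal (D (k + 1) ω) := by
          grw [ENNReal.ofReal_add_le, ENNReal.ofReal_add_le]
      _ ≤ _ := by
          grw [single_le_sum (f := fun k => ENNReal.ofReal (-D (k + 1) ω - M))
            (fun _ _ => zero_le) (self_mem_range_succ n)]
          exact le_of_eq (by ac_rfl)

section Measure

variable [MeasurableSpace Ω] {μ : Measure Ω}

theorem adapted_freeWalk (hD : ∀ k, Measurable (D k)) (c : ℝ) :
    Adapted (Filtration.natural D fun k => (hD k).stronglyMeasurable) (freeWalk D c) := by
  have hDk := Filtration.stronglyAdapted_natural fun k => (hD k).stronglyMeasurable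
  exact fun k => measurable_const.add <| Finset.measurable_sum _ fun i hi =>
    (hDk (i + 1)).measurable.mono (Filtration.mono _ (by simpa using hi)) le_rfl

theorem measurableSet_survivalEvent (hD : ∀ k, Measurable (D k)) (c : ℝ) (k : ℕ) :
    MeasurableSet[(Filtration.natural D fun k => (hD k).stronglyMeasurable) k]
      (survivalEvent D c k) := by
  have : survivalEvent D c k = ⋂ j ∈ Icc 1 k, {ω | 0 < freeWalk D c j ω} := by
    ext; simp [survivalEvent]
  rw [this]
  exact Finset.measurableSet_biInter _ fun j hj =>
    measurableSet_lt measurable_const ((adapted_freeWalk hD c).measurable_le (mem_Icc.1 hj).2)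

theorem measurable_mul_indicator_survivalEvent (hD : ∀ k, Measurable (D k)) {g : ℝ → ℝ≥0∞}
    (hg : Measurable g) (c : ℝ) (k : ℕ) :
    Measurable fun ω => g (D (k + 1) ω) * (survivalEvent D c k).indicator 1 ω :=
  (hg.comp (hD _)).mul <| measurable_const.indicator <|
    Filtration.le _ k _ (measurableSet_survivalEvent hD c k)

theorem lintegral_mul_indicator_survivalEvent (hD : ∀ k, Measurable (D k))
    (hiid : iIndepFun D μ) (hident : ∀ k, IdentDistrib (D k) (D 1) μ μ) {g : ℝ → ℝ≥0∞}
    (hg : Measurable g) (c : ℝ) (k : ℕ) :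
    ∫⁻ ω, g (D (k + 1) ω) * (survivalEvent D c k).indicator 1 ω ∂μ
      = (∫⁻ ω, g (D 1 ω) ∂μ) * μ (survivalEvent D c k) := by
  have hA := measurableSet_survivalEvent hD c k
  have hgD : ∫⁻ ω, g (D (k + 1) ω) ∂μ = ∫⁻ ω, g (D 1 ω) ∂μ :=
    ((hident (k + 1)).comp hg).lintegral_eq
  rw [lintegral_mul_eq_lintegral_mul_lintegral_of_independent_measurableSpace
      (f := fun ω => g (D (k + 1) ω)) (g := (survivalEvent D c k).indicator 1)
      (hD (k + 1)).comap_le (Filtration.le _ k)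
      (hiid.indep_comap_natural_of_lt _ (Nat.lt_succ_self k))
      (hg.comp (comap_measurable _)) (measurable_const.indicator hA),
    hgD, lintegral_indicator_one (Filtration.le _ k _ hA)]

theorem lintegral_sum_mul_indicator_survivalEvent (hD : ∀ k, Measurable (D k))
    (hiid : iIndepFun D μ) (hident : ∀ k, IdentDistrib (D k) (D 1) μ μ) {g : ℝ → ℝ≥0∞}
    (hg : Measurable g) (c : ℝ) (n : ℕ) :
    ∫⁻ ω, ∑ k ∈ range n, g (D (k + 1) ω) * (survivalEvent D c k).indicator 1 ω ∂μ
      = (∫⁻ ω, g (D 1 ω) ∂μ) * ∑ k ∈ range n, μ (survivalEvent D c k) := by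
  rw [lintegral_finsetSum _ fun k _ => measurable_mul_indicator_survivalEvent hD hg c k, mul_sum]
  exact sum_congr rfl fun k _ => lintegral_mul_indicator_survivalEvent hD hiid hident hg c k

theorem lintegral_tsum_mul_indicator_survivalEvent (hD : ∀ k, Measurable (D k))
    (hiid : iIndepFun D μ) (hident : ∀ k, IdentDistrib (D k) (D 1) μ μ) {g : ℝ → ℝ≥0∞}
    (hg : Measurable g) (c : ℝ) :
    ∫⁻ ω, ∑' k, g (D (k + 1) ω) * (survivalEvent D c k).indicator 1 ω ∂μ
      = (∫⁻ ω, g (D 1 ω) ∂μ) * ∑' k, μ (survivalEvent D c k) := by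
  rw [lintegral_tsum fun k => (measurable_mul_indicator_survivalEvent hD hg c k).aemeasurable,
    ← ENNReal.tsum_mul_left]
  exact tsum_congr fun k => lintegral_mul_indicator_survivalEvent hD hiid hident hg c k

theorem lintegral_tsum_indicator_survivalEvent (hD : ∀ k, Measurable (D k)) (c : ℝ) :
    ∫⁻ ω, ∑' k, (survivalEvent D c k).indicator 1 ω ∂μ = ∑' k, μ (survivalEvent D c k) := by
  have hA k := Filtration.le _ k _ (measurableSet_survivalEvent hD c k)
  rw [lintegral_tsum fun k => (measurable_one.indicator (hA k)).aemeasurable]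
  exact tsum_congr fun k => lintegral_indicator_one (hA k)

theorem mul_sum_measure_survivalEvent_le (hD : ∀ k, Measurable (D k)) (hiid : iIndepFun D μ)
    (hident : ∀ k, IdentDistrib (D k) (D 1) μ μ) (hc : 0 < c) (M : ℝ) (n : ℕ) :
    (∫⁻ ω, ENNReal.ofReal (-D 1 ω) ∂μ) * ∑ k ∈ range n, μ (survivalEvent D c k)
      ≤ ENNReal.ofReal c + ENNReal.ofReal M + ((∫⁻ ω, ENNReal.ofReal (D 1 ω) ∂μ) +
          ∫⁻ ω, ENNReal.ofReal (-D 1 ω - M) ∂μ) * ∑ k ∈ range n, μ (survivalEvent D c k) := by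
  have := hiid.isProbabilityMeasure
  calc _ = ∫⁻ ω, ∑ k ∈ range n,
            ENNReal.ofReal (-D (k + 1) ω) * (survivalEvent D c k).indicator 1 ω ∂μ :=
        (lintegral_sum_mul_indicator_survivalEvent hD hiid hident
          (g := fun y => ENNReal.ofReal (-y)) (by fun_prop) c n).symm
    _ ≤ ∫⁻ ω, ENNReal.ofReal c + ENNReal.ofReal M + ∑ k ∈ range n,
            (ENNReal.ofReal (D (k + 1) ω) + ENNReal.ofReal (-D (k + 1) ω - M)) *
              (survivalEvent D c k).indicator 1 ω ∂μ :=
        lintegral_mono fun ω => sum_ofReal_neg_mul_indicator_survivalEvent_le hc M ω n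
    _ = _ := by
        rw [lintegral_add_left measurable_const, lintegral_const, measure_univ, mul_one,
          lintegral_sum_mul_indicator_survivalEvent hD hiid hident
            (g := fun y => ENNReal.ofReal y + ENNReal.ofReal (-y - M)) (by fun_prop) c n,
          lintegral_add_left (by fun_prop)]

theorem tsum_measure_survivalEvent_le (hD : ∀ k, Measurable (D k)) (hiid : iIndepFun D μ)
    (hident : ∀ k, IdentDistrib (D k) (D 1) μ μ) {δ : ℝ} (hDint : Integrable (D 1) μ)
    (hmean : ∫ ω, D 1 ω ∂μ = -δ) (hc : 0 < c) {M : ℝ} (hM : 0 ≤ M)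
    (he : (∫⁻ ω, ENNReal.ofReal (-D 1 ω - M) ∂μ).toReal < δ) :
    ∑' k, μ (survivalEvent D c k)
      ≤ ENNReal.ofReal ((c + M) / (δ - (∫⁻ ω, ENNReal.ofReal (-D 1 ω - M) ∂μ).toReal)) := by
  have := hiid.isProbabilityMeasure
  set a := ∫⁻ ω, ENNReal.ofReal (-D 1 ω) ∂μ
  set b := ∫⁻ ω, ENNReal.ofReal (D 1 ω) ∂μ
  set e := ∫⁻ ω, ENNReal.ofReal (-D 1 ω - M) ∂μ
  have hδ : δ = a.toReal - b.toReal := by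
    linarith [integral_eq_lintegral_pos_part_sub_lintegral_neg_part hDint]
  have ha : a ≠ ⊤ := hDint.neg.lintegral_lt_top.ne
  have hb : b ≠ ⊤ := hDint.lintegral_lt_top.ne
  have he' : e ≠ ⊤ := (hDint.neg.sub (integrable_const M)).lintegral_lt_top.ne
  refine ENNReal.tsum_le_of_sum_range_le fun n => ?_
  set p := ∑ k ∈ range n, μ (survivalEvent D c k)
  have hp : p ≠ ⊤ := ENNReal.sum_ne_top.2 fun _ _ => measure_ne_top _ _
  have hreal := ENNReal.toReal_mono (by finiteness)
    (mul_sum_measure_survivalEvent_le hD hiid hident hc M n)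
  rw [ENNReal.toReal_add (by finiteness) (by finiteness), ENNReal.toReal_add (by finiteness)
    (by finiteness), ENNReal.toReal_mul, ENNReal.toReal_mul, ENNReal.toReal_add hb he',
    ENNReal.toReal_ofReal hc.le, ENNReal.toReal_ofReal hM] at hreal
  rw [← ENNReal.ofReal_toReal hp]
  exact ENNReal.ofReal_le_ofReal ((le_div_iff₀ (by linarith)).2 (by nlinarith))

theorem ae_exists_freeWalk_nonpos (hD : ∀ k, Measurable (D k))
    (hfin : ∑' k, μ (survivalEvent D c k) ≠ ⊤) :
    ∀ᵐ ω ∂μ, ∃ j, 1 ≤ j ∧ freeWalk D c j ω ≤ 0 := by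
  have hA k := Filtration.le _ k _ (measurableSet_survivalEvent hD c k)
  filter_upwards [ae_lt_top (Measurable.tsum fun k => measurable_one.indicator (hA k))
    (by rwa [lintegral_tsum_indicator_survivalEvent hD])] with ω hω
  by_contra! h
  have hmem k : ω ∈ survivalEvent D c k := fun j hj => h j (mem_Icc.1 hj).1
  simp [Set.indicator_of_mem (hmem _)] at hω

theorem ofReal_add_mul_tsum_measure_survivalEvent_le (hD : ∀ k, Measurable (D k))
    (hiid : iIndepFun D μ) (hident : ∀ k, IdentDistrib (D k) (D 1) μ μ) (hc : 0 ≤ c)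
    (hfin : ∑' k, μ (survivalEvent D c k) ≠ ⊤) :
    ENNReal.ofReal c + (∫⁻ ω, ENNReal.ofReal (D 1 ω) ∂μ) * ∑' k, μ (survivalEvent D c k)
      ≤ (∫⁻ ω, ENNReal.ofReal (-D 1 ω) ∂μ) * ∑' k, μ (survivalEvent D c k) := by
  have := hiid.isProbabilityMeasure
  calc _ = ∫⁻ ω, ENNReal.ofReal c +
            ∑' k, ENNReal.ofReal (D (k + 1) ω) * (survivalEvent D c k).indicator 1 ω ∂μ := by
        rw [lintegral_add_left measurable_const, lintegral_const, measure_univ, mul_one,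
          lintegral_tsum_mul_indicator_survivalEvent hD hiid hident (g := ENNReal.ofReal)
            ENNReal.measurable_ofReal]
    _ ≤ ∫⁻ ω, ∑' k, ENNReal.ofReal (-D (k + 1) ω) * (survivalEvent D c k).indicator 1 ω ∂μ :=
        lintegral_mono_ae <| (ae_exists_freeWalk_nonpos hD hfin).mono fun ω h =>
          ofReal_add_tsum_mul_indicator_survivalEvent_le hc h
    _ = _ := lintegral_tsum_mul_indicator_survivalEvent hD hiid hident
          (g := fun y => ENNReal.ofReal (-y)) (by fun_prop) c

theorem le_mul_toReal_tsum_measure_survivalEvent (hD : ∀ k, Measurable (D k))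
    (hiid : iIndepFun D μ) (hident : ∀ k, IdentDistrib (D k) (D 1) μ μ) {δ : ℝ}
    (hDint : Integrable (D 1) μ) (hmean : ∫ ω, D 1 ω ∂μ = -δ) (hc : 0 ≤ c)
    (hfin : ∑' k, μ (survivalEvent D c k) ≠ ⊤) :
    c ≤ δ * (∑' k, μ (survivalEvent D c k)).toReal := by
  set a := ∫⁻ ω, ENNReal.ofReal (-D 1 ω) ∂μ
  set b := ∫⁻ ω, ENNReal.ofReal (D 1 ω) ∂μ
  have hδ : δ = a.toReal - b.toReal := by
    linarith [integral_eq_lintegral_pos_part_sub_lintegral_neg_part hDint]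
  have ha : a ≠ ⊤ := hDint.neg.lintegral_lt_top.ne
  have hb : b ≠ ⊤ := hDint.lintegral_lt_top.ne
  have hreal := ENNReal.toReal_mono (by finiteness)
    (ofReal_add_mul_tsum_measure_survivalEvent_le hD hiid hident hc hfin)
  rw [ENNReal.toReal_add (by finiteness) (by finiteness), ENNReal.toReal_mul, ENNReal.toReal_mul,
    ENNReal.toReal_ofReal hc] at hreal
  rw [hδ, sub_mul]
  linarith

theorem tsum_measure_survivalEvent_ne_top (hD : ∀ k, Measurable (D k)) (hiid : iIndepFun D μ)
    (hident : ∀ k, IdentDistrib (D k) (D 1) μ μ) {δ : ℝ} (hδ : 0 < δ)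
    (hDint : Integrable (D 1) μ) (hmean : ∫ ω, D 1 ω ∂μ = -δ) (hc : 0 < c) :
    ∑' k, μ (survivalEvent D c k) ≠ ⊤ := by
  have he := (ENNReal.tendsto_toReal ENNReal.zero_ne_top).comp
    (tendsto_lintegral_ofReal_sub_natCast (μ := μ) (hD 1).neg hDint.neg.lintegral_lt_top.ne)
  obtain ⟨M, hM⟩ := (he.eventually (gt_mem_nhds hδ)).exists
  exact ne_top_of_le_ne_top ENNReal.ofReal_ne_top
    (tsum_measure_survivalEvent_le hD hiid hident hDint hmean hc M.cast_nonneg hM)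

theorem tendsto_inv_mul_toReal_tsum_measure_survivalEvent (hD : ∀ k, Measurable (D k))
    (hiid : iIndepFun D μ) (hident : ∀ k, IdentDistrib (D k) (D 1) μ μ) {δ : ℝ} (hδ : 0 < δ)
    (hDint : Integrable (D 1) μ) (hmean : ∫ ω, D 1 ω ∂μ = -δ) {x : ℝ} (hx : 0 < x) :
    Tendsto (fun r => r⁻¹ * (∑' k, μ (survivalEvent D (r * x) k)).toReal) atTop (𝓝 (δ⁻¹ * x)) := by
  set e : ℕ → ℝ := fun M => (∫⁻ ω, ENNReal.ofReal (-D 1 ω - M) ∂μ).toReal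
  have he : Tendsto e atTop (𝓝 0) := (ENNReal.tendsto_toReal ENNReal.zero_ne_top).comp
    (tendsto_lintegral_ofReal_sub_natCast (hD 1).neg hDint.neg.lintegral_lt_top.ne)
  refine tendsto_of_lower_bound_of_upper_bounds (l' := atTop)
    (u := fun (M : ℕ) r => (δ - e M)⁻¹ * (x + M * r⁻¹)) (U := fun M => (δ - e M)⁻¹ * x)
    ?_ ?_ (fun M => ?_) ?_
  · filter_upwards [eventually_gt_atTop 0] with r hr
    have hlow := le_mul_toReal_tsum_measure_survivalEvent hD hiid hident hDint hmean
      (c := r * x) (by positivity) (tsum_measure_survivalEvent_ne_top hD hiid hident hδ hDint hmean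
        (by positivity))
    rw [← le_inv_mul_iff₀ hr] at hlow
    rwa [inv_mul_le_iff₀ hδ, mul_left_comm]
  · filter_upwards [he.eventually (gt_mem_nhds hδ)] with M hM
    filter_upwards [eventually_gt_atTop 0] with r hr
    have hup := tsum_measure_survivalEvent_le hD hiid hident hDint hmean (c := r * x)
      (by positivity) M.cast_nonneg hM
    calc _ ≤ r⁻¹ * ((r * x + M) / (δ - e M)) := by
          gcongr
          exact ENNReal.toReal_le_of_le_ofReal (div_nonneg (by positivity) (by linarith)) hup
      _ = _ := by field_simp
  · simpa using (tendsto_const_nhds.add (tendsto_const_nhds.mul tendsto_inv_atTop_zero)).const_mul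
      (δ - e M)⁻¹
  · simpa using (tendsto_const_nhds.sub he).inv₀ (by simpa using hδ.ne') |>.mul_const x

end Measure

end ReflectedRandomWalk

open ReflectedRandomWalk in
theorem reflected_rw_return_time_fluid_limit_general {Ω : Type*} [MeasureSpace Ω]
    (D : ℕ → Ω → ℝ) (hDmeas : ∀ k, Measurable (D k))
    (hiid : iIndepFun D)
    (hident : ∀ k, IdentDistrib (D k) (D 1))
    (δ : ℝ) (hδ : 0 < δ) (hDint : Integrable (D 1)) (hmean : (∫ ω, D 1 ω) = -δ)
    (x : ℝ) (hx : 0 < x)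
    (Φ : ℝ → ℕ → Ω → ℝ)
    (hΦ0 : ∀ r ω, Φ r 0 ω = r * x)
    (hΦstep : ∀ r k ω, Φ r (k + 1) ω = max (Φ r k ω + D (k + 1) ω) 0)
    (τ : ℝ → Ω → ℝ≥0∞)
    (hτ : ∀ r ω, τ r ω = ⨅ (k : ℕ) (_ : 1 ≤ k ∧ Φ r k ω = 0), (k : ℝ≥0∞)) :
    (∀ r : ℝ, 0 < r → (∫⁻ ω, τ r ω) < ⊤) ∧
      Tendsto (fun r : ℝ => r⁻¹ * (∫⁻ ω, τ r ω).toReal) atTop (nhds (δ⁻¹ * x)) := by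
  have hEτ r : ∫⁻ ω, τ r ω = ∑' k, ℙ (survivalEvent D (r * x) k) := by
    rw [← lintegral_tsum_indicator_survivalEvent hDmeas]
    exact lintegral_congr fun ω => (hτ r ω).trans
      (iInf_eq_tsum_indicator_survivalEvent (hΦ0 r ω) fun k => hΦstep r k ω)
  simp_rw [hEτ]
  exact ⟨fun r hr => (tsum_measure_survivalEvent_ne_top hDmeas hiid hident hδ hDint hmean
      (mul_pos hr hx)).lt_top,
    tendsto_inv_mul_toReal_tsum_measure_survivalEvent hDmeas hiid hident hδ hDint hmean hx⟩

/-- **Proposition 3.2(ii), first limit.** For the reflected random walk driven by an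
i.i.d. sequence `(D k)` with `δ = −E[D] > 0`, `E[D²] < ∞` and `P{D > 0} > 0`, started at
`Φ^r(0) = r·x` with `x > 0`, the first return time `τ₀^r` to the origin has finite mean,
and `r⁻¹ E[τ₀^r] → δ⁻¹ x` as `r → ∞`. -/
theorem reflected_rw_return_time_fluid_limit {Ω : Type*} [MeasureSpace Ω]
    [IsProbabilityMeasure (ℙ : Measure Ω)]
    (D : ℕ → Ω → ℝ) (hDmeas : ∀ k, Measurable (D k))
    (hiid : iIndepFun D)
    (hident : ∀ k, IdentDistrib (D k) (D 1))
    (δ : ℝ) (hδ : 0 < δ) (hDint : Integrable (D 1)) (hmean : (∫ ω, D 1 ω) = -δ)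
    (hDsq : Integrable (fun ω => (D 1 ω) ^ 2))
    (hpos : 0 < ℙ {ω | 0 < D 1 ω})
    (x : ℝ) (hx : 0 < x)
    (Φ : ℝ → ℕ → Ω → ℝ)
    (hΦ0 : ∀ r ω, Φ r 0 ω = r * x)
    (hΦstep : ∀ r k ω, Φ r (k + 1) ω = max (Φ r k ω + D (k + 1) ω) 0)
    (τ : ℝ → Ω → ℝ≥0∞)
    (hτ : ∀ r ω, τ r ω = ⨅ (k : ℕ) (_ : 1 ≤ k ∧ Φ r k ω = 0), (k : ℝ≥0∞)) :
    (∀ r : ℝ, 0 < r → (∫⁻ ω, τ r ω) < ⊤) ∧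
      Tendsto (fun r : ℝ => r⁻¹ * (∫⁻ ω, τ r ω).toReal) atTop (nhds (δ⁻¹ * x)) :=
  reflected_rw_return_time_fluid_limit_general D hDmeas hiid hident δ hδ hDint hmean x hx Φ hΦ0
    hΦstep τ hτ
end

section
/- Let (D(k))_{k≥1} be an i.i.d. sequence of real-valued random variables with δ := −E[D(1)] > 0, E[D(1)²] < ∞, and P{D(1) > 0} > 0. For r > 0 and x > 0, let Φ^r be the reflected random walk started at Φ^r(0) = r·x, i.e., Φ^r(k+1) = max(Φ^r(k) + D(k+1), 0), and let τ₀^r := inf{k ≥ 1 : Φ^r(k) = 0}. Then lim_{r→∞} r⁻² E[Σ_{k=0}^{τ₀^r − 1} Φ^r(k)] = (2δ)⁻¹ x². -/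
/-!
Let `σ` be the first time the walk `S k = a + D 1 + ⋯ + D k`, `a = r x`, leaves `(0, ∞)`. Before
`σ` the reflected walk coincides with `S`, so the expected area is `∑ₖ E[S k; σ > k]`. Squaring
the walk stopped at `σ` and using independence of the next step gives
`E[S_{n ∧ σ}²] = a² - 2δ ∑_{k<n} E[S k; σ > k] + E[D²] ∑_{k<n} P(σ > k)`, while Wald's identity
together with a bound on the undershoot below `0` shows that `E[σ] = O(a)`; hence the area is at
most `a² / (2δ) + O(a)`. Conversely, for `k ≤ θ a / δ` with `θ < 1`, Kolmogorov's inequality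
shows `P(σ ≤ k) = O(1 / a)`, so `E[S k; σ > k] ≥ a - δ k - O(√a)`; summing gives
`θ (1 - θ / 2) a² / δ - O(a^{3/2})`, and letting `θ → 1` gives the limit `a² / (2δ)`.
-/

open MeasureTheory ProbabilityTheory Filter Finset
open scoped ENNReal Topology

lemma sum_range_natCast_mul_two (n : ℕ) : (∑ i ∈ range n, (i : ℝ)) * 2 = n * (n - 1) := by
  induction n with
  | zero => simp
  | succ n ih => rw [sum_range_succ, add_mul, ih]; push_cast; ring

lemma mul_sq_div_le_sum_range_floor {δ a θ : ℝ} (hδ : 0 < δ) (ha : 0 ≤ a) (hθ0 : 0 ≤ θ)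
    (hθ1 : θ ≤ 1) :
    θ * (1 - θ / 2) * a ^ 2 / δ ≤ ∑ k ∈ range (⌊θ * a / δ⌋₊ + 1), (a - δ * k) := by
  set N := ⌊θ * a / δ⌋₊
  have hN : (N : ℝ) ≤ θ * a / δ := Nat.floor_le (by positivity)
  have hN1 : θ * a / δ < N + 1 := Nat.lt_floor_add_one _
  have hsum : ∑ k ∈ range (N + 1), (a - δ * k) = (N + 1) * (a - δ * N / 2) := by
    have h := sum_range_natCast_mul_two (N + 1)
    rw [sum_sub_distrib, sum_const, card_range, nsmul_eq_mul, ← mul_sum]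
    push_cast at h ⊢
    linear_combination (-δ / 2) * h
  have hδN : δ * N ≤ θ * a := by rwa [le_div_iff₀' hδ] at hN
  rw [hsum]
  calc θ * (1 - θ / 2) * a ^ 2 / δ = θ * a / δ * (a - θ * a / 2) := by field_simp
    _ ≤ (N + 1) * (a - δ * N / 2) :=
        mul_le_mul hN1.le (by linarith) (by nlinarith) (by positivity)

lemma natCast_lt_iInf_natCast_iff {P : ℕ → Prop} {n : ℕ} :
    (n : ℝ≥0∞) < ⨅ (k : ℕ) (_ : P k), (k : ℝ≥0∞) ↔ ∀ k, P k → n < k := by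
  refine ⟨fun h k hk => by exact_mod_cast h.trans_le (iInf₂_le k hk), fun h => ?_⟩
  calc (n : ℝ≥0∞) < n + 1 := ENNReal.lt_add_right (ENNReal.natCast_ne_top n) one_ne_zero
    _ ≤ _ := le_iInf₂ fun k hk => by exact_mod_cast h k hk

section

variable {Ω : Type*} {m : MeasurableSpace Ω} {μ : Measure Ω}

lemma setIntegral_le_of_memLp_two [IsFiniteMeasure μ] {f : Ω → ℝ} (hf : MemLp f 2 μ)
    {s : Set Ω} {l : ℝ} (hl : 0 < l) :
    ∫ ω in s, f ω ∂μ ≤ l / 2 * μ.real s + (∫ ω, f ω ^ 2 ∂μ) / (2 * l) := by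
  have hamgm : ∀ ω, f ω ≤ l / 2 + f ω ^ 2 / (2 * l) := fun ω => by
    rw [div_add_div _ _ two_ne_zero (by positivity), le_div_iff₀ (by positivity)]
    nlinarith [sq_nonneg (f ω - l)]
  have hf2 := hf.integrable_sq
  calc ∫ ω in s, f ω ∂μ ≤ ∫ ω in s, (l / 2 + f ω ^ 2 / (2 * l)) ∂μ :=
        setIntegral_mono (hf.integrable one_le_two).integrableOn
          ((integrable_const _).add (hf2.div_const _)).integrableOn hamgm
    _ = l / 2 * μ.real s + (∫ ω in s, f ω ^ 2 ∂μ) / (2 * l) := by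
        rw [integral_add (integrable_const _).integrableOn (hf2.div_const _).integrableOn,
          setIntegral_const, smul_eq_mul, mul_comm, integral_div]
    _ ≤ _ := by
        gcongr
        exacts [.of_forall fun ω => sq_nonneg _, Measure.restrict_le_self]

end

namespace RandomWalk

variable {Ω : Type*} {m : MeasurableSpace Ω} {μ : Measure Ω}

structure IsSquareIntegrableIID (X : ℕ → Ω → ℝ) (μ : Measure Ω) : Prop where
  measurable : ∀ i, Measurable (X i)
  iIndepFun : iIndepFun X μ
  identDistrib : ∀ i, IdentDistrib (X i) (X 1) μ μ
  memLp_two : MemLp (X 1) 2 μ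

def walk (X : ℕ → Ω → ℝ) (a : ℝ) (n : ℕ) (ω : Ω) : ℝ :=
  a + ∑ i ∈ range n, X (i + 1) ω

def staysIn (X : ℕ → Ω → ℝ) (a : ℝ) (S : Set ℝ) (n : ℕ) : Set Ω :=
  {ω | ∀ k ≤ n, walk X a k ω ∈ S}

/-- The walk stopped at the first step that leaves `S`, that step included. -/
noncomputable def stoppedWalk (X : ℕ → Ω → ℝ) (a : ℝ) (S : Set ℝ) (n : ℕ) (ω : Ω) : ℝ :=
  a + ∑ k ∈ range n, (staysIn X a S k).indicator (X (k + 1)) ω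

variable {X : ℕ → Ω → ℝ} {a : ℝ} {S : Set ℝ} {n : ℕ} {ω : Ω}

@[simp] lemma walk_zero : walk X a 0 ω = a := by simp [walk]

lemma walk_succ : walk X a (n + 1) ω = walk X a n ω + X (n + 1) ω := by
  simp only [walk, sum_range_succ, add_assoc]

lemma staysIn_anti : Antitone (staysIn X a S) :=
  fun _ _ hmn _ hω k hk => hω k (hk.trans hmn)

lemma mem_staysIn_succ :
    ω ∈ staysIn X a S (n + 1) ↔ ω ∈ staysIn X a S n ∧ walk X a (n + 1) ω ∈ S := by
  refine ⟨fun h => ⟨staysIn_anti n.le_succ h, h _ le_rfl⟩, fun ⟨h, hn⟩ k hk => ?_⟩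
  rcases Nat.le_succ_iff.1 hk with hk | rfl
  exacts [h k hk, hn]

@[simp] lemma staysIn_univ : staysIn X a Set.univ n = Set.univ := by simp [staysIn]

lemma stoppedWalk_succ : stoppedWalk X a S (n + 1) ω =
    stoppedWalk X a S n ω + (staysIn X a S n).indicator (X (n + 1)) ω := by
  simp only [stoppedWalk, sum_range_succ, add_assoc]

lemma stoppedWalk_eq_walk (h : ω ∈ staysIn X a S n) : stoppedWalk X a S n ω = walk X a n ω := by
  induction n with
  | zero => simp [stoppedWalk]
  | succ n ih =>
    have hn := staysIn_anti n.le_succ h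
    rw [stoppedWalk_succ, ih hn, Set.indicator_of_mem hn, walk_succ]

lemma stoppedWalk_univ : stoppedWalk X a Set.univ n ω = walk X a n ω :=
  stoppedWalk_eq_walk (by simp)

lemma exists_exit_of_notMem_staysIn (ha : a ∈ S) (h : ω ∉ staysIn X a S n) :
    ∃ k < n, ω ∈ staysIn X a S k ∧ walk X a (k + 1) ω ∉ S ∧
      stoppedWalk X a S n ω = walk X a (k + 1) ω := by
  induction n with
  | zero => exact absurd (fun k hk => by simpa [Nat.le_zero.1 hk] using ha) h
  | succ n ih =>
    by_cases hn : ω ∈ staysIn X a S n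
    · refine ⟨n, n.lt_succ_self, hn, fun hS => h (mem_staysIn_succ.2 ⟨hn, hS⟩), ?_⟩
      rw [stoppedWalk_succ, stoppedWalk_eq_walk hn, Set.indicator_of_mem hn, walk_succ]
    · obtain ⟨k, hkn, hk, hkS, hstop⟩ := ih hn
      refine ⟨k, hkn.trans n.lt_succ_self, hk, hkS, ?_⟩
      rw [stoppedWalk_succ, Set.indicator_of_notMem hn, add_zero, hstop]

lemma undershoot_sq_le (ha : 0 < a) :
    max (-stoppedWalk X a (Set.Ioi 0) n ω) 0 ^ 2 ≤
      ∑ k ∈ range n, (staysIn X a (Set.Ioi 0) k).indicator (fun ω => X (k + 1) ω ^ 2) ω := by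
  have hnonneg : ∀ k ∈ range n,
      0 ≤ (staysIn X a (Set.Ioi 0) k).indicator (fun ω => X (k + 1) ω ^ 2) ω :=
    fun k _ => Set.indicator_nonneg (fun _ _ => sq_nonneg _) ω
  by_cases h : ω ∈ staysIn X a (Set.Ioi 0) n
  · have hpos : 0 < stoppedWalk X a (Set.Ioi 0) n ω := stoppedWalk_eq_walk h ▸ h n le_rfl
    simpa [max_eq_right (neg_nonpos.2 hpos.le)] using sum_nonneg hnonneg
  obtain ⟨k, hkn, hk, hk1, hstop⟩ := exists_exit_of_notMem_staysIn (Set.mem_Ioi.2 ha) h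
  have hk0 : 0 < walk X a k ω := hk k le_rfl
  rw [walk_succ, Set.mem_Ioi, not_lt] at hk1
  calc max (-stoppedWalk X a (Set.Ioi 0) n ω) 0 ^ 2 ≤ X (k + 1) ω ^ 2 := by
        rw [hstop, walk_succ, max_eq_left (by linarith)]
        nlinarith
    _ = (staysIn X a (Set.Ioi 0) k).indicator (fun ω => X (k + 1) ω ^ 2) ω :=
        (Set.indicator_of_mem hk (fun ω => X (k + 1) ω ^ 2)).symm
    _ ≤ _ := single_le_sum hnonneg (mem_range.2 hkn)

lemma reflected_eq_walk {φ : ℕ → Ω → ℝ} (h0 : φ 0 ω = a)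
    (hstep : ∀ k, φ (k + 1) ω = max (φ k ω + X (k + 1) ω) 0)
    (h : ω ∈ staysIn X a (Set.Ioi 0) n) : φ n ω = walk X a n ω := by
  induction n with
  | zero => simpa using h0
  | succ n ih =>
    rw [hstep, ih (staysIn_anti n.le_succ h), ← walk_succ, max_eq_left (h _ le_rfl).le]

lemma mem_staysIn_iff_reflected_ne_zero {φ : ℕ → Ω → ℝ} (ha : 0 < a) (h0 : φ 0 ω = a)
    (hstep : ∀ k, φ (k + 1) ω = max (φ k ω + X (k + 1) ω) 0) :
    ω ∈ staysIn X a (Set.Ioi 0) n ↔ ∀ k, 1 ≤ k → k ≤ n → φ k ω ≠ 0 := by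
  refine ⟨fun h k _ hkn => ?_, fun h => ?_⟩
  · rw [reflected_eq_walk h0 hstep (staysIn_anti hkn h)]
    exact (h k hkn).ne'
  induction n with
  | zero => simpa [staysIn] using ha
  | succ n ih =>
    have hn := ih fun k hk1 hkn => h k hk1 (hkn.trans n.le_succ)
    refine mem_staysIn_succ.2 ⟨hn, Set.mem_Ioi.2 <| lt_of_not_ge fun hle =>
      h (n + 1) le_add_self le_rfl ?_⟩
    rw [hstep, reflected_eq_walk h0 hstep hn, ← walk_succ, max_eq_right hle]

lemma natCast_lt_iInf_zeros_iff_mem_staysIn {φ : ℕ → Ω → ℝ} (ha : 0 < a) (h0 : φ 0 ω = a)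
    (hstep : ∀ k, φ (k + 1) ω = max (φ k ω + X (k + 1) ω) 0) :
    (n : ℝ≥0∞) < ⨅ (k : ℕ) (_ : 1 ≤ k ∧ φ k ω = 0), (k : ℝ≥0∞) ↔
      ω ∈ staysIn X a (Set.Ioi 0) n := by
  rw [natCast_lt_iInf_natCast_iff, mem_staysIn_iff_reflected_ne_zero ha h0 hstep]
  exact ⟨fun h k hk1 hkn hk0 => (h k ⟨hk1, hk0⟩).not_ge hkn,
    fun h k ⟨hk1, hk0⟩ => lt_of_not_ge fun hkn => h k hk1 hkn hk0⟩

section Measurability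

variable (hX : ∀ i, StronglyMeasurable (X i))

lemma measurable_walk_natural {k : ℕ} (hk : k ≤ n) :
    Measurable[Filtration.natural X hX n] (walk X a k) := by
  refine measurable_const.add (Finset.measurable_fun_sum _ fun i hi => ?_)
  refine ((Filtration.stronglyAdapted_natural hX (i + 1)).mono ?_).measurable
  exact Filtration.mono _ (by simp at hi; omega)

lemma measurableSet_staysIn_natural (hS : MeasurableSet S) :
    MeasurableSet[Filtration.natural X hX n] (staysIn X a S n) := by
  have : staysIn X a S n = ⋂ k ∈ Set.Iic n, walk X a k ⁻¹' S := by ext; simp [staysIn]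
  rw [this]
  exact MeasurableSet.biInter (Set.to_countable _) fun k hk => measurable_walk_natural hX hk hS

end Measurability

namespace IsSquareIntegrableIID

variable (hX : IsSquareIntegrableIID X μ)
include hX

lemma stronglyMeasurable (i : ℕ) : StronglyMeasurable (X i) :=
  (hX.measurable i).stronglyMeasurable

lemma memLp (i : ℕ) : MemLp (X i) 2 μ :=
  (hX.identDistrib i).memLp_iff.2 hX.memLp_two

lemma measurableSet_staysIn (hS : MeasurableSet S) (n : ℕ) : MeasurableSet (staysIn X a S n) :=
  Filtration.le _ n _ (measurableSet_staysIn_natural hX.stronglyMeasurable hS)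

lemma integral_mul_comp_succ {F : Ω → ℝ}
    (hF : Measurable[Filtration.natural X hX.stronglyMeasurable n] F) {g : ℝ → ℝ}
    (hg : Measurable g) :
    ∫ ω, F ω * g (X (n + 1) ω) ∂μ = (∫ ω, F ω ∂μ) * ∫ ω, g (X 1 ω) ∂μ := by
  have hind : IndepFun F (X (n + 1)) μ := (IndepFun_iff_Indep _ _ _).2 <|
    indep_of_indep_of_le_left
      (hX.iIndepFun.indep_comap_natural_of_lt hX.stronglyMeasurable n.lt_succ_self).symm
      hF.comap_le
  calc _ = (∫ ω, F ω ∂μ) * ∫ ω, g (X (n + 1) ω) ∂μ :=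
        hind.integral_fun_comp_mul_comp (f := id) (hF.mono (Filtration.le _ n) le_rfl).aemeasurable
          (hX.measurable _).aemeasurable aestronglyMeasurable_id hg.aestronglyMeasurable
    _ = _ := congrArg _ ((hX.identDistrib (n + 1)).comp hg).integral_eq

lemma integral_indicator_mul_comp_succ (hS : MeasurableSet S) {F : Ω → ℝ}
    (hF : Measurable[Filtration.natural X hX.stronglyMeasurable n] F) {g : ℝ → ℝ}
    (hg : Measurable g) :
    ∫ ω, (staysIn X a S n).indicator F ω * g (X (n + 1) ω) ∂μ =
      (∫ ω in staysIn X a S n, F ω ∂μ) * ∫ ω, g (X 1 ω) ∂μ := by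
  rw [hX.integral_mul_comp_succ (hF.indicator
    (measurableSet_staysIn_natural hX.stronglyMeasurable hS)) hg,
    integral_indicator (hX.measurableSet_staysIn hS n)]

lemma integral_indicator_comp_succ (hS : MeasurableSet S) {g : ℝ → ℝ} (hg : Measurable g) :
    ∫ ω, (staysIn X a S n).indicator (fun ω => g (X (n + 1) ω)) ω ∂μ =
      μ.real (staysIn X a S n) * ∫ ω, g (X 1 ω) ∂μ := by
  have := hX.integral_indicator_mul_comp_succ (a := a) (n := n) hS (F := fun _ => 1)
    measurable_const hg
  simp only [setIntegral_const, smul_eq_mul, mul_one] at this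
  rw [← this]
  congr 1 with ω
  by_cases h : ω ∈ staysIn X a S n <;> simp [h]

lemma setIntegral_walk_nonneg (a : ℝ) (k : ℕ) :
    0 ≤ ∫ ω in staysIn X a (Set.Ioi 0) k, walk X a k ω ∂μ :=
  setIntegral_nonneg (hX.measurableSet_staysIn measurableSet_Ioi k) fun _ hω => (hω k le_rfl).le

variable [IsProbabilityMeasure μ]

lemma memLp_walk (a : ℝ) (n : ℕ) : MemLp (walk X a n) 2 μ :=
  (memLp_const a).add (memLp_finsetSum _ fun i _ => hX.memLp (i + 1))

lemma memLp_stoppedWalk (hS : MeasurableSet S) (n : ℕ) : MemLp (stoppedWalk X a S n) 2 μ :=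
  (memLp_const a).add (memLp_finsetSum _ fun k _ =>
    (hX.memLp (k + 1)).indicator (hX.measurableSet_staysIn hS k))

lemma integral_stoppedWalk (hS : MeasurableSet S) (n : ℕ) :
    ∫ ω, stoppedWalk X a S n ω ∂μ =
      a + (∫ ω, X 1 ω ∂μ) * ∑ k ∈ range n, μ.real (staysIn X a S k) := by
  induction n with
  | zero => simp [stoppedWalk]
  | succ n ih =>
    have hA := hX.measurableSet_staysIn (a := a) hS n
    simp only [stoppedWalk_succ]
    rw [integral_add ((hX.memLp_stoppedWalk hS n).integrable one_le_two)
      (((hX.memLp (n + 1)).integrable one_le_two).indicator hA), ih,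
      hX.integral_indicator_comp_succ (g := fun x => x) hS measurable_id, sum_range_succ]
    ring

lemma integral_stoppedWalk_sq (hS : MeasurableSet S) (n : ℕ) :
    ∫ ω, stoppedWalk X a S n ω ^ 2 ∂μ =
      a ^ 2 + 2 * (∫ ω, X 1 ω ∂μ) * ∑ k ∈ range n, ∫ ω in staysIn X a S k, walk X a k ω ∂μ
        + (∫ ω, X 1 ω ^ 2 ∂μ) * ∑ k ∈ range n, μ.real (staysIn X a S k) := by
  induction n with
  | zero => simp [stoppedWalk]
  | succ n ih =>
    have hsq : ∀ ω, stoppedWalk X a S (n + 1) ω ^ 2 = stoppedWalk X a S n ω ^ 2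
        + 2 * ((staysIn X a S n).indicator (walk X a n) ω * X (n + 1) ω)
        + (staysIn X a S n).indicator (fun ω => X (n + 1) ω ^ 2) ω := fun ω => by
      by_cases h : ω ∈ staysIn X a S n
      · simp only [stoppedWalk_succ, Set.indicator_of_mem h, stoppedWalk_eq_walk h]; ring
      · simp [stoppedWalk_succ, h]
    have hcross := hX.integral_indicator_mul_comp_succ (a := a) (n := n) hS
      (measurable_walk_natural hX.stronglyMeasurable (a := a) le_rfl) measurable_id
    simp only [id] at hcross
    have hA := hX.measurableSet_staysIn (a := a) hS n
    have hSP : Integrable (fun ω => stoppedWalk X a S n ω ^ 2) μ :=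
      (hX.memLp_stoppedWalk hS n).integrable_sq
    have hcrossI : Integrable
        (fun ω => (staysIn X a S n).indicator (walk X a n) ω * X (n + 1) ω) μ :=
      ((hX.memLp_walk a n).indicator hA).integrable_mul (hX.memLp (n + 1))
    simp only [hsq]
    rw [integral_add (hSP.fun_add (hcrossI.const_mul 2))
        ((hX.memLp (n + 1)).integrable_sq.indicator hA),
      integral_add hSP (hcrossI.const_mul 2), integral_const_mul, hcross,
      hX.integral_indicator_comp_succ (g := fun x => x ^ 2) hS (measurable_id.pow_const 2), ih,
      sum_range_succ, sum_range_succ]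
    ring

lemma integral_walk (a : ℝ) (n : ℕ) : ∫ ω, walk X a n ω ∂μ = a + (∫ ω, X 1 ω ∂μ) * n := by
  simpa [stoppedWalk_univ] using hX.integral_stoppedWalk (a := a) MeasurableSet.univ n

lemma integral_walk_sq (a : ℝ) (n : ℕ) :
    ∫ ω, walk X a n ω ^ 2 ∂μ = (a + (∫ ω, X 1 ω ∂μ) * n) ^ 2 + Var[X 1; μ] * n := by
  have h := hX.integral_stoppedWalk_sq (a := a) MeasurableSet.univ n
  simp only [stoppedWalk_univ, staysIn_univ, Measure.restrict_univ, hX.integral_walk,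
    probReal_univ, sum_const, card_range, nsmul_eq_mul, mul_one, sum_add_distrib,
    ← mul_sum] at h
  rw [h, variance_eq_sub hX.memLp_two]
  simp only [Pi.pow_apply]
  linear_combination (∫ ω, X 1 ω ∂μ) ^ 2 * sum_range_natCast_mul_two n

lemma add_const (c : ℝ) : IsSquareIntegrableIID (fun i ω => X i ω + c) μ where
  measurable i := (hX.measurable i).add_const c
  iIndepFun := hX.iIndepFun.comp (fun _ x => x + c) fun _ => measurable_add_const c
  identDistrib i := (hX.identDistrib i).comp (measurable_add_const c)
  memLp_two := hX.memLp_two.add (memLp_const c)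

/-- Kolmogorov's maximal inequality, one-sided. -/
lemma measureReal_compl_staysIn_mul_sq_le (hmean : ∫ ω, X 1 ω ∂μ = 0) {l : ℝ} (hl : 0 < l)
    (n : ℕ) :
    μ.real (staysIn X 0 (Set.Ioi (-l)) n)ᶜ * l ^ 2 ≤ Var[X 1; μ] * n := by
  have hS : MeasurableSet (Set.Ioi (-l)) := measurableSet_Ioi
  have hA := (hX.measurableSet_staysIn (a := 0) hS n).compl
  have hexit : ∀ ω, (staysIn X 0 (Set.Ioi (-l)) n)ᶜ.indicator (fun _ => l ^ 2) ω ≤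
      stoppedWalk X 0 (Set.Ioi (-l)) n ω ^ 2 := fun ω => by
    by_cases h : ω ∈ staysIn X 0 (Set.Ioi (-l)) n
    · simp [h, sq_nonneg]
    · obtain ⟨k, -, -, hk, hstop⟩ := exists_exit_of_notMem_staysIn (by simpa using hl) h
      rw [Set.indicator_of_mem h, hstop]
      simp only [Set.mem_Ioi, not_lt] at hk
      nlinarith
  have hP : ∑ k ∈ range n, μ.real (staysIn X 0 (Set.Ioi (-l)) k) ≤ n :=
    (sum_le_card_nsmul _ _ 1 fun _ _ => measureReal_le_one).trans (by simp)
  calc μ.real (staysIn X 0 (Set.Ioi (-l)) n)ᶜ * l ^ 2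
      = ∫ ω, (staysIn X 0 (Set.Ioi (-l)) n)ᶜ.indicator (fun _ => l ^ 2) ω ∂μ := by
        rw [integral_indicator_const _ hA, smul_eq_mul]
    _ ≤ ∫ ω, stoppedWalk X 0 (Set.Ioi (-l)) n ω ^ 2 ∂μ :=
        integral_mono ((integrable_const _).indicator hA)
          (hX.memLp_stoppedWalk hS n).integrable_sq hexit
    _ = Var[X 1; μ] * ∑ k ∈ range n, μ.real (staysIn X 0 (Set.Ioi (-l)) k) := by
        rw [hX.integral_stoppedWalk_sq hS, variance_eq_sub hX.memLp_two, hmean]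
        simp
    _ ≤ Var[X 1; μ] * n := mul_le_mul_of_nonneg_left hP (variance_nonneg _ _)

lemma integral_undershoot_sq_le (ha : 0 < a) (n : ℕ) :
    ∫ ω, max (-stoppedWalk X a (Set.Ioi 0) n ω) 0 ^ 2 ∂μ ≤
      (∫ ω, X 1 ω ^ 2 ∂μ) * ∑ k ∈ range n, μ.real (staysIn X a (Set.Ioi 0) k) := by
  have hint k := (hX.memLp (k + 1)).integrable_sq.indicator
    (hX.measurableSet_staysIn (a := a) (measurableSet_Ioi (a := (0 : ℝ))) k)
  calc ∫ ω, max (-stoppedWalk X a (Set.Ioi 0) n ω) 0 ^ 2 ∂μ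
      ≤ ∫ ω, ∑ k ∈ range n,
          (staysIn X a (Set.Ioi 0) k).indicator (fun ω => X (k + 1) ω ^ 2) ω ∂μ :=
        integral_mono (hX.memLp_stoppedWalk measurableSet_Ioi n).neg.pos_part.integrable_sq
          (integrable_finsetSum _ fun k _ => hint k) fun ω => undershoot_sq_le ha
    _ = _ := by
        rw [integral_finsetSum _ fun k _ => hint k, mul_sum]
        refine sum_congr rfl fun k _ => ?_
        rw [hX.integral_indicator_comp_succ (g := fun x => x ^ 2) measurableSet_Ioi
          (measurable_id.pow_const 2), mul_comm]

lemma sum_measureReal_staysIn_le {δ : ℝ} (hδ : 0 < δ) (hmean : ∫ ω, X 1 ω ∂μ = -δ) (ha : 0 < a)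
    (n : ℕ) :
    δ * ∑ k ∈ range n, μ.real (staysIn X a (Set.Ioi 0) k) ≤
      2 * a + (∫ ω, X 1 ω ^ 2 ∂μ) / δ + 1 := by
  set P := ∑ k ∈ range n, μ.real (staysIn X a (Set.Ioi 0) k)
  set m2 := ∫ ω, X 1 ω ^ 2 ∂μ
  set g := fun ω => max (-stoppedWalk X a (Set.Ioi 0) n ω) 0
  have hSP := hX.memLp_stoppedWalk (a := a) (S := Set.Ioi 0) measurableSet_Ioi n
  have hg : MemLp g 2 μ := hSP.neg.pos_part
  have hwald : δ * P ≤ a + ∫ ω, g ω ∂μ := by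
    have hle : -∫ ω, g ω ∂μ ≤ ∫ ω, stoppedWalk X a (Set.Ioi 0) n ω ∂μ := by
      rw [← integral_neg]
      exact integral_mono (hg.integrable one_le_two).neg (hSP.integrable one_le_two)
        fun ω => neg_le.1 (le_max_left _ _)
    rw [hX.integral_stoppedWalk measurableSet_Ioi, hmean] at hle
    linarith
  -- `l` is chosen so that the quadratic term below is at most `δ P / 2`
  set l := m2 / δ + 1
  have hm2 : 0 ≤ m2 := integral_nonneg fun ω => sq_nonneg _
  have hamgm := setIntegral_le_of_memLp_two hg (s := Set.univ) (l := l) (by positivity)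
  rw [Measure.restrict_univ, probReal_univ, mul_one] at hamgm
  have hP : 0 ≤ P := sum_nonneg fun _ _ => measureReal_nonneg
  have hquot : (∫ ω, g ω ^ 2 ∂μ) / (2 * l) ≤ δ * P / 2 := by
    rw [div_le_iff₀ (by positivity)]
    have : m2 ≤ δ * l := by simp only [l, mul_add, mul_div_cancel₀ _ hδ.ne']; linarith
    nlinarith [hX.integral_undershoot_sq_le ha n, mul_le_mul_of_nonneg_right this hP]
  linarith

lemma sum_setIntegral_walk_le {δ : ℝ} (hδ : 0 < δ) (hmean : ∫ ω, X 1 ω ∂μ = -δ) (ha : 0 < a)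
    (n : ℕ) :
    2 * δ * ∑ k ∈ range n, ∫ ω in staysIn X a (Set.Ioi 0) k, walk X a k ω ∂μ ≤
      a ^ 2 + (∫ ω, X 1 ω ^ 2 ∂μ) * (2 * a + (∫ ω, X 1 ω ^ 2 ∂μ) / δ + 1) / δ := by
  have hsq := hX.integral_stoppedWalk_sq (a := a) (S := Set.Ioi 0) measurableSet_Ioi n
  have hsq_nonneg : 0 ≤ ∫ ω, stoppedWalk X a (Set.Ioi 0) n ω ^ 2 ∂μ :=
    integral_nonneg fun ω => sq_nonneg _
  have hP := (le_div_iff₀' hδ).2 (hX.sum_measureReal_staysIn_le hδ hmean ha n)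
  have hm2 : 0 ≤ ∫ ω, X 1 ω ^ 2 ∂μ := integral_nonneg fun ω => sq_nonneg _
  rw [hmean] at hsq
  rw [mul_div_assoc]
  nlinarith [mul_le_mul_of_nonneg_left hP hm2]

lemma measureReal_compl_staysIn_mul_sq_le_of_drift {δ : ℝ} (hδ : 0 ≤ δ) (hmean : ∫ ω, X 1 ω ∂μ = -δ)
    {l : ℝ} (hl : 0 < l) {k : ℕ} (hk : δ * k + l ≤ a) :
    μ.real (staysIn X a (Set.Ioi 0) k)ᶜ * l ^ 2 ≤ Var[X 1; μ] * k := by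
  have hcentered : ∫ ω, X 1 ω + δ ∂μ = 0 := by
    rw [integral_add ((hX.memLp 1).integrable one_le_two) (integrable_const δ), hmean]; simp
  have hsub : staysIn (fun i ω => X i ω + δ) 0 (Set.Ioi (-l)) k ⊆ staysIn X a (Set.Ioi 0) k := by
    intro ω hω j hj
    have hj' : δ * j ≤ δ * k := mul_le_mul_of_nonneg_left (Nat.cast_le.2 hj) hδ
    have := hω j hj
    simp only [walk, Set.mem_Ioi, sum_add_distrib, sum_const, card_range, nsmul_eq_mul] at this ⊢
    nlinarith
  calc μ.real (staysIn X a (Set.Ioi 0) k)ᶜ * l ^ 2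
      ≤ μ.real (staysIn (fun i ω => X i ω + δ) 0 (Set.Ioi (-l)) k)ᶜ * l ^ 2 := by
        gcongr
        exact measure_ne_top _ _
    _ ≤ Var[fun ω => X 1 ω + δ; μ] * k :=
        (hX.add_const δ).measureReal_compl_staysIn_mul_sq_le hcentered hl k
    _ = Var[X 1; μ] * k := by
        rw [variance_add_const (hX.measurable 1).aestronglyMeasurable]

lemma integral_walk_sq_le {δ : ℝ} (hδ : 0 < δ) (hmean : ∫ ω, X 1 ω ∂μ = -δ) (ha : 1 ≤ a)
    {k : ℕ} (hk : δ * k ≤ a) :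
    ∫ ω, walk X a k ω ^ 2 ∂μ ≤ (1 + Var[X 1; μ] / δ) * a ^ 2 := by
  have hσ2 : 0 ≤ Var[X 1; μ] := variance_nonneg _ _
  have hδk : 0 ≤ δ * k := by positivity
  have hσk : Var[X 1; μ] * k ≤ Var[X 1; μ] / δ * a ^ 2 := by
    rw [div_mul_eq_mul_div, le_div_iff₀ hδ, mul_assoc, mul_comm (k : ℝ)]
    exact mul_le_mul_of_nonneg_left (hk.trans (by nlinarith)) hσ2
  have hdrift : (a + -δ * k) ^ 2 ≤ a ^ 2 := by
    nlinarith [mul_nonneg hδk (by linarith : 0 ≤ 2 * a - δ * k)]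
  rw [hX.integral_walk_sq, hmean]
  linarith

lemma exists_setIntegral_walk_ge {δ : ℝ} (hδ : 0 < δ) (hmean : ∫ ω, X 1 ω ∂μ = -δ) {θ : ℝ}
    (hθ0 : 0 ≤ θ) (hθ1 : θ < 1) :
    ∃ C ≥ 0, ∀ a ≥ 1, ∀ k : ℕ, δ * k ≤ θ * a →
      a - δ * k - C * √a ≤ ∫ ω in staysIn X a (Set.Ioi 0) k, walk X a k ω ∂μ := by
  set σ2 := Var[X 1; μ]
  have hσ2 : 0 ≤ σ2 := variance_nonneg _ _
  have hθ : 0 < 1 - θ := by linarith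
  refine ⟨(σ2 * θ / (δ * (1 - θ) ^ 2) + (1 + σ2 / δ)) / 2, by positivity, fun a ha k hk => ?_⟩
  obtain ⟨t, ht1, rfl⟩ : ∃ t, 1 ≤ t ∧ a = t ^ 2 :=
    ⟨√a, Real.one_le_sqrt.2 ha, (Real.sq_sqrt (by linarith)).symm⟩
  rw [Real.sqrt_sq (by linarith)]
  set A := staysIn X (t ^ 2) (Set.Ioi 0) k
  have hA : MeasurableSet A := hX.measurableSet_staysIn measurableSet_Ioi k
  have ht0 : 0 < t := by linarith
  -- by Kolmogorov's inequality, the walk dies before time `k` with probability `O(1 / a)`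
  have hexit : t ^ 2 * μ.real Aᶜ ≤ σ2 * θ / (δ * (1 - θ) ^ 2) := by
    have h := hX.measureReal_compl_staysIn_mul_sq_le_of_drift (a := t ^ 2) hδ.le hmean
      (l := (1 - θ) * t ^ 2) (by positivity) (k := k) (by linarith)
    have hσk : σ2 * (δ * k) ≤ σ2 * (θ * t ^ 2) := mul_le_mul_of_nonneg_left hk hσ2
    rw [le_div_iff₀ (by positivity)]
    refine le_of_mul_le_mul_left ?_ (by positivity : 0 < t ^ 2)
    nlinarith
  have hsecond := hX.integral_walk_sq_le hδ hmean (a := t ^ 2) (by nlinarith)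
    (hk.trans (by nlinarith))
  have hsplit : ∫ ω in A, walk X (t ^ 2) k ω ∂μ =
      (t ^ 2 - δ * k) - ∫ ω in Aᶜ, walk X (t ^ 2) k ω ∂μ := by
    rw [eq_sub_iff_add_eq, integral_add_compl hA ((hX.memLp_walk _ k).integrable one_le_two),
      hX.integral_walk, hmean]
    ring
  -- the weight `t³ = a^{3/2}` balances the two error terms at order `√a`
  have hamgm := setIntegral_le_of_memLp_two (hX.memLp_walk (t ^ 2) k) (s := Aᶜ)
    (l := t ^ 3) (by positivity)
  have h1 : t ^ 3 / 2 * μ.real Aᶜ ≤ σ2 * θ / (δ * (1 - θ) ^ 2) / 2 * t := by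
    nlinarith
  have h2 : (∫ ω, walk X (t ^ 2) k ω ^ 2 ∂μ) / (2 * t ^ 3) ≤ (1 + σ2 / δ) / 2 * t := by
    rw [div_le_iff₀ (by positivity)]
    nlinarith
  linarith

lemma summable_setIntegral_walk {δ : ℝ} (hδ : 0 < δ) (hmean : ∫ ω, X 1 ω ∂μ = -δ) (ha : 0 < a) :
    Summable fun k => ∫ ω in staysIn X a (Set.Ioi 0) k, walk X a k ω ∂μ :=
  summable_of_sum_range_le (hX.setIntegral_walk_nonneg a) fun n =>
    (le_div_iff₀' (by positivity)).2 (hX.sum_setIntegral_walk_le hδ hmean ha n)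

lemma exists_tsum_setIntegral_walk_le {δ : ℝ} (hδ : 0 < δ) (hmean : ∫ ω, X 1 ω ∂μ = -δ) :
    ∃ C, ∀ a ≥ 1,
      (a ^ 2)⁻¹ * ∑' k, ∫ ω in staysIn X a (Set.Ioi 0) k, walk X a k ω ∂μ ≤ (2 * δ)⁻¹ + C / a := by
  set m2 := ∫ ω, X 1 ω ^ 2 ∂μ
  have hm2 : 0 ≤ m2 := integral_nonneg fun ω => sq_nonneg _
  refine ⟨m2 * (3 + m2 / δ) / (2 * δ ^ 2), fun a ha => ?_⟩
  have ha0 : 0 < a := by linarith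
  have htsum := Real.tsum_le_of_sum_range_le (hX.setIntegral_walk_nonneg a) fun n =>
    (le_div_iff₀' (by positivity)).2 (hX.sum_setIntegral_walk_le hδ hmean ha0 n)
  have hlin : m2 * (2 * a + m2 / δ + 1) ≤ m2 * (3 + m2 / δ) * a := by
    nlinarith [mul_nonneg hm2 (div_nonneg hm2 hδ.le)]
  calc (a ^ 2)⁻¹ * ∑' k, ∫ ω in staysIn X a (Set.Ioi 0) k, walk X a k ω ∂μ
      ≤ (a ^ 2)⁻¹ * ((a ^ 2 + m2 * (2 * a + m2 / δ + 1) / δ) / (2 * δ)) := by gcongr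
    _ ≤ (a ^ 2)⁻¹ * ((a ^ 2 + m2 * (3 + m2 / δ) * a / δ) / (2 * δ)) := by gcongr
    _ = (2 * δ)⁻¹ + m2 * (3 + m2 / δ) / (2 * δ ^ 2) / a := by field_simp

lemma exists_le_tsum_setIntegral_walk {δ : ℝ} (hδ : 0 < δ) (hmean : ∫ ω, X 1 ω ∂μ = -δ) {θ : ℝ}
    (hθ0 : 0 ≤ θ) (hθ1 : θ < 1) :
    ∃ C, ∀ a ≥ 1, θ * (1 - θ / 2) / δ - C / √a ≤
      (a ^ 2)⁻¹ * ∑' k, ∫ ω in staysIn X a (Set.Ioi 0) k, walk X a k ω ∂μ := by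
  obtain ⟨C, hC0, hC⟩ := hX.exists_setIntegral_walk_ge hδ hmean hθ0 hθ1
  refine ⟨(θ / δ + 1) * C, fun a ha => ?_⟩
  have ha0 : 0 < a := by linarith
  set N := ⌊θ * a / δ⌋₊
  have hN : (N : ℝ) ≤ θ * a / δ := Nat.floor_le (by positivity)
  have hpartial : ∑ k ∈ range (N + 1), (a - δ * k) - (N + 1) * C * √a ≤
      ∑' k, ∫ ω in staysIn X a (Set.Ioi 0) k, walk X a k ω ∂μ := by
    refine le_trans ?_ ((hX.summable_setIntegral_walk hδ hmean ha0).sum_le_tsum (range (N + 1))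
      fun k _ => hX.setIntegral_walk_nonneg a k)
    calc ∑ k ∈ range (N + 1), (a - δ * k) - (N + 1) * C * √a
        = ∑ k ∈ range (N + 1), (a - δ * k - C * √a) := by
          rw [sum_sub_distrib (f := fun k : ℕ => a - δ * k), sum_const, card_range, nsmul_eq_mul]
          push_cast
          ring
      _ ≤ _ := sum_le_sum fun k hk => hC a ha k <| by
          have : (k : ℝ) ≤ N := Nat.cast_le.2 (Nat.lt_succ_iff.1 (mem_range.1 hk))
          rw [le_div_iff₀' hδ] at hN
          nlinarith
  have hmain : θ * (1 - θ / 2) * a ^ 2 / δ - (θ * a / δ + 1) * C * √a ≤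
      ∑' k, ∫ ω in staysIn X a (Set.Ioi 0) k, walk X a k ω ∂μ := by
    have h1 := mul_sq_div_le_sum_range_floor hδ ha0.le hθ0 hθ1.le
    have h2 : (N + 1) * C * √a ≤ (θ * a / δ + 1) * C * √a := by gcongr
    linarith
  refine le_trans ?_ (mul_le_mul_of_nonneg_left hmain (by positivity))
  obtain ⟨t, ht1, rfl⟩ : ∃ t, 1 ≤ t ∧ a = t ^ 2 :=
    ⟨√a, Real.one_le_sqrt.2 ha, (Real.sq_sqrt ha0.le).symm⟩
  rw [Real.sqrt_sq (by linarith)]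
  field_simp
  nlinarith [mul_nonneg (mul_nonneg hC0 hδ.le) (by nlinarith : (0 : ℝ) ≤ t ^ 2 - 1)]

lemma tendsto_tsum_setIntegral_walk {δ : ℝ} (hδ : 0 < δ) (hmean : ∫ ω, X 1 ω ∂μ = -δ) :
    Tendsto (fun a => (a ^ 2)⁻¹ * ∑' k, ∫ ω in staysIn X a (Set.Ioi 0) k, walk X a k ω ∂μ)
      atTop (𝓝 (2 * δ)⁻¹) := by
  refine tendsto_order.2 ⟨fun b hb => ?_, fun b hb => ?_⟩
  · have hθ : Tendsto (fun θ : ℝ => θ * (1 - θ / 2) / δ) (𝓝[<] 1) (𝓝 (2 * δ)⁻¹) := by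
      refine tendsto_nhdsWithin_of_tendsto_nhds
        ((by fun_prop : Continuous fun θ : ℝ => θ * (1 - θ / 2) / δ).tendsto' 1 _ ?_)
      field_simp
      norm_num
    obtain ⟨θ, hbθ, hθ01⟩ :=
      ((hθ.eventually (lt_mem_nhds hb)).and (Ioo_mem_nhdsLT zero_lt_one)).exists
    obtain ⟨C, hC⟩ := hX.exists_le_tsum_setIntegral_walk hδ hmean hθ01.1.le hθ01.2
    have hlim : Tendsto (fun a => θ * (1 - θ / 2) / δ - C / √a) atTop
        (𝓝 (θ * (1 - θ / 2) / δ)) := by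
      simpa using (tendsto_const_nhds (x := θ * (1 - θ / 2) / δ)).sub
        ((tendsto_const_nhds (x := C)).div_atTop Real.tendsto_sqrt_atTop)
    filter_upwards [hlim.eventually (lt_mem_nhds hbθ), eventually_ge_atTop 1] with a h1 h2
    exact h1.trans_le (hC a h2)
  · obtain ⟨C, hC⟩ := hX.exists_tsum_setIntegral_walk_le hδ hmean
    have hlim : Tendsto (fun a => (2 * δ)⁻¹ + C / a) atTop (𝓝 (2 * δ)⁻¹) := by
      simpa using (tendsto_const_nhds (x := (2 * δ)⁻¹)).add
        ((tendsto_const_nhds (x := C)).div_atTop tendsto_id)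
    filter_upwards [hlim.eventually (gt_mem_nhds hb), eventually_ge_atTop 1] with a h1 h2
    exact (hC a h2).trans_lt h1

lemma lintegral_tsum_reflected_eq (ha : 0 < a) {φ : ℕ → Ω → ℝ} (h0 : ∀ ω, φ 0 ω = a)
    (hstep : ∀ k ω, φ (k + 1) ω = max (φ k ω + X (k + 1) ω) 0) :
    ∫⁻ ω, ∑' k : ℕ, {k : ℕ | (k : ℝ≥0∞) < ⨅ (j : ℕ) (_ : 1 ≤ j ∧ φ j ω = 0), (j : ℝ≥0∞)}.indicator
        (fun k => ENNReal.ofReal (φ k ω)) k ∂μ =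
      ∑' k, ENNReal.ofReal (∫ ω in staysIn X a (Set.Ioi 0) k, walk X a k ω ∂μ) := by
  have hA k := hX.measurableSet_staysIn (a := a) (measurableSet_Ioi (a := (0 : ℝ))) k
  have hterm : ∀ ω k, {k : ℕ | (k : ℝ≥0∞) < ⨅ (j : ℕ) (_ : 1 ≤ j ∧ φ j ω = 0), (j : ℝ≥0∞)}.indicator
      (fun k => ENNReal.ofReal (φ k ω)) k =
      (staysIn X a (Set.Ioi 0) k).indicator (fun ω => ENNReal.ofReal (walk X a k ω)) ω := by
    intro ω k
    have hset : {k : ℕ | (k : ℝ≥0∞) < ⨅ (j : ℕ) (_ : 1 ≤ j ∧ φ j ω = 0), (j : ℝ≥0∞)} =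
        {k | ω ∈ staysIn X a (Set.Ioi 0) k} :=
      Set.ext fun _ => natCast_lt_iInf_zeros_iff_mem_staysIn ha (h0 ω) (hstep · ω)
    rw [hset]
    by_cases h : ω ∈ staysIn X a (Set.Ioi 0) k
    · rw [Set.indicator_of_mem (show k ∈ {k | ω ∈ staysIn X a (Set.Ioi 0) k} from h),
        Set.indicator_of_mem h, reflected_eq_walk (h0 ω) (hstep · ω) h]
    · rw [Set.indicator_of_notMem (show k ∉ {k | ω ∈ staysIn X a (Set.Ioi 0) k} from h),
        Set.indicator_of_notMem h]
  simp_rw [hterm]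
  rw [lintegral_tsum fun k => (((measurable_walk_natural hX.stronglyMeasurable le_rfl).mono
    (Filtration.le _ k) le_rfl).ennreal_ofReal.indicator (hA k)).aemeasurable]
  refine tsum_congr fun k => ?_
  rw [lintegral_indicator (hA k), ofReal_integral_eq_lintegral_ofReal
    ((hX.memLp_walk a k).integrable one_le_two).integrableOn
    ((ae_restrict_iff' (hA k)).2 (.of_forall fun ω hω => (hω k le_rfl).le))]

end IsSquareIntegrableIID

end RandomWalk

open RandomWalk

theorem reflected_rw_area_fluid_limit_general {Ω : Type*} [MeasureSpace Ω]
    [IsProbabilityMeasure (ℙ : Measure Ω)]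
    (D : ℕ → Ω → ℝ) (hDmeas : ∀ k, Measurable (D k))
    (hiid : iIndepFun D)
    (hident : ∀ k, IdentDistrib (D k) (D 1))
    (δ : ℝ) (hδ : 0 < δ) (hmean : (∫ ω, D 1 ω) = -δ)
    (hDsq : Integrable (fun ω => (D 1 ω) ^ 2))
    (x : ℝ) (hx : 0 < x)
    (Φ : ℝ → ℕ → Ω → ℝ)
    (hΦ0 : ∀ r ω, Φ r 0 ω = r * x)
    (hΦstep : ∀ r k ω, Φ r (k + 1) ω = max (Φ r k ω + D (k + 1) ω) 0)
    (τ : ℝ → Ω → ℝ≥0∞)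
    (hτ : ∀ r ω, τ r ω = ⨅ (k : ℕ) (_ : 1 ≤ k ∧ Φ r k ω = 0), (k : ℝ≥0∞)) :
    Tendsto (fun r : ℝ => (r ^ 2)⁻¹ *
        (∫⁻ ω, ∑' k : ℕ,
          Set.indicator {k : ℕ | (k : ℝ≥0∞) < τ r ω}
            (fun k => ENNReal.ofReal (Φ r k ω)) k).toReal)
      atTop (nhds ((2 * δ)⁻¹ * x ^ 2)) := by
  have hD : IsSquareIntegrableIID D ℙ :=
    ⟨hDmeas, hiid, hident, (memLp_two_iff_integrable_sq (hDmeas 1).aestronglyMeasurable).2 hDsq⟩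
  have hlim := ((hD.tendsto_tsum_setIntegral_walk hδ hmean).comp
    (tendsto_id.atTop_mul_const hx)).mul_const (x ^ 2)
  refine hlim.congr' ?_
  filter_upwards [eventually_gt_atTop 0] with r hr
  have hrx : 0 < r * x := mul_pos hr hx
  simp only [hτ, Function.comp_apply, id]
  rw [hD.lintegral_tsum_reflected_eq hrx (hΦ0 r) (hΦstep r),
    ← ENNReal.ofReal_tsum_of_nonneg (hD.setIntegral_walk_nonneg _)
      (hD.summable_setIntegral_walk hδ hmean hrx),
    ENNReal.toReal_ofReal (tsum_nonneg (hD.setIntegral_walk_nonneg _))]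
  field_simp

/-- **Proposition 3.2(ii), second limit.** For the reflected random walk driven by an
i.i.d. sequence `(D k)` with `δ = −E[D] > 0`, `E[D²] < ∞` and `P{D > 0} > 0`, started at
`Φ^r(0) = r·x` with `x > 0` and with first return time `τ₀^r` to the origin,
`r⁻² E[∑_{k < τ₀^r} Φ^r(k)] → (2δ)⁻¹ x²` as `r → ∞`. -/
theorem reflected_rw_area_fluid_limit {Ω : Type*} [MeasureSpace Ω]
    [IsProbabilityMeasure (ℙ : Measure Ω)]
    (D : ℕ → Ω → ℝ) (hDmeas : ∀ k, Measurable (D k))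
    (hiid : iIndepFun D)
    (hident : ∀ k, IdentDistrib (D k) (D 1))
    (δ : ℝ) (hδ : 0 < δ) (hDint : Integrable (D 1)) (hmean : (∫ ω, D 1 ω) = -δ)
    (hDsq : Integrable (fun ω => (D 1 ω) ^ 2))
    (hpos : 0 < ℙ {ω | 0 < D 1 ω})
    (x : ℝ) (hx : 0 < x)
    (Φ : ℝ → ℕ → Ω → ℝ)
    (hΦ0 : ∀ r ω, Φ r 0 ω = r * x)
    (hΦstep : ∀ r k ω, Φ r (k + 1) ω = max (Φ r k ω + D (k + 1) ω) 0)
    (τ : ℝ → Ω → ℝ≥0∞)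
    (hτ : ∀ r ω, τ r ω = ⨅ (k : ℕ) (_ : 1 ≤ k ∧ Φ r k ω = 0), (k : ℝ≥0∞)) :
    Tendsto (fun r : ℝ => (r ^ 2)⁻¹ *
        (∫⁻ ω, ∑' k : ℕ,
          Set.indicator {k : ℕ | (k : ℝ≥0∞) < τ r ω}
            (fun k => ENNReal.ofReal (Φ r k ω)) k).toReal)
      atTop (nhds ((2 * δ)⁻¹ * x ^ 2)) :=
  reflected_rw_area_fluid_limit_general D hDmeas hiid hident δ hδ hmean hDsq x hx Φ hΦ0 hΦstep τ hτ
end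

section
/- Let X ≥ 0 and D be independent real-valued random variables such that max(X + D, 0) has the same distribution as X. (i) If β > 0 satisfies E[e^{βD}] > 1, then E[e^{βX}] = ∞. (ii) Consequently, if P{D > 0} > 0 and π is an invariant probability measure for the reflected random walk kernel x ↦ law of max(x + D, 0), then there exists β₀ > 0 such that ∫ e^{βx} π(dx) = ∞ for every β ≥ β₀. -/
/-!
With `e(x) = e^{βx}` and `β ≥ 0` we have `e(max(x + d, 0)) ≥ e(x) e(d)`. Integrating against
the product of the law `μ` of `X` and the law `ν` of `D` and using invariance gives
`∫ e dμ ≥ ∫ e dμ · ∫ e dν`, which forces `∫ e dμ = ∞` as soon as `∫ e dν > 1`, because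
`∫ e dμ > 0`. If `P{D > 0} > 0` then `P{D > ε} > 0` for some `ε > 0`, and
`E[e^{βD}] ≥ e^{βε} P{D > ε}` exceeds `1` for all large `β`.
-/

open MeasureTheory ProbabilityTheory Filter Topology
open scoped ENNReal

theorem ENNReal.eq_top_of_mul_le_self {a b : ℝ≥0∞} (ha : a ≠ 0) (hb : 1 < b) (h : a * b ≤ a) :
    a = ⊤ := by
  by_contra ha_top
  simpa using (ENNReal.mul_lt_mul_right ha ha_top hb).trans_le h

noncomputable def expMoment (μ : Measure ℝ) (β : ℝ) : ℝ≥0∞ :=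
  ∫⁻ x, ENNReal.ofReal (Real.exp (β * x)) ∂μ

lemma measurable_ofReal_exp_mul (β : ℝ) :
    Measurable fun x : ℝ => ENNReal.ofReal (Real.exp (β * x)) := by
  fun_prop

lemma expMoment_map {Ω : Type*} [MeasurableSpace Ω] {P : Measure Ω} {X : Ω → ℝ}
    (hX : Measurable X) (β : ℝ) :
    expMoment (P.map X) β = ∫⁻ ω, ENNReal.ofReal (Real.exp (β * X ω)) ∂P :=
  lintegral_map (measurable_ofReal_exp_mul β) hX

lemma expMoment_ne_zero (μ : Measure ℝ) [NeZero μ] (β : ℝ) : expMoment μ β ≠ 0 := by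
  rw [expMoment, Ne, lintegral_eq_zero_iff (measurable_ofReal_exp_mul β)]
  intro h
  obtain ⟨x, hx⟩ := h.exists
  exact (ENNReal.ofReal_pos.2 (Real.exp_pos (β * x))).ne' hx

lemma ofReal_exp_mul_mul_le_ofReal_exp_mul_max {β : ℝ} (hβ : 0 ≤ β) (x d : ℝ) :
    ENNReal.ofReal (Real.exp (β * x)) * ENNReal.ofReal (Real.exp (β * d))
      ≤ ENNReal.ofReal (Real.exp (β * max (x + d) 0)) := by
  rw [← ENNReal.ofReal_mul (Real.exp_pos _).le, ← Real.exp_add, ← mul_add]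
  gcongr
  exact le_max_left _ _

theorem expMoment_eq_top_of_map_max_add_prod_eq {μ ν : Measure ℝ} [SFinite μ] [NeZero μ]
    [SFinite ν] (hinv : (μ.prod ν).map (fun p : ℝ × ℝ => max (p.1 + p.2) 0) = μ) {β : ℝ}
    (hβ : 0 ≤ β) (hν : 1 < expMoment ν β) : expMoment μ β = ⊤ := by
  have hm := measurable_ofReal_exp_mul β
  refine ENNReal.eq_top_of_mul_le_self (expMoment_ne_zero μ β) hν ?_
  calc expMoment μ β * expMoment ν β
      = ∫⁻ p : ℝ × ℝ, ENNReal.ofReal (Real.exp (β * p.1)) * ENNReal.ofReal (Real.exp (β * p.2))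
          ∂μ.prod ν := (lintegral_prod_mul hm.aemeasurable hm.aemeasurable).symm
    _ ≤ ∫⁻ p : ℝ × ℝ, ENNReal.ofReal (Real.exp (β * max (p.1 + p.2) 0)) ∂μ.prod ν :=
        lintegral_mono fun p => ofReal_exp_mul_mul_le_ofReal_exp_mul_max hβ p.1 p.2
    _ = expMoment μ β := by
        rw [← lintegral_map hm (by fun_prop), hinv, expMoment]

lemma exists_pos_measure_lt_of_measure_pos {ν : Measure ℝ} (hν : 0 < ν {d | 0 < d}) :
    ∃ ε > 0, 0 < ν {d | ε < d} := by
  have hunion : (⋃ n : ℕ, {d : ℝ | 1 / (n + 1 : ℝ) < d}) = {d | 0 < d} := by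
    ext d
    simp only [Set.mem_iUnion, Set.mem_ofPred_eq]
    exact ⟨fun ⟨n, hn⟩ => lt_trans (by positivity) hn, exists_nat_one_div_lt⟩
  obtain ⟨n, hn⟩ := exists_measure_pos_of_not_measure_iUnion_null (hunion ▸ hν.ne')
  exact ⟨1 / (n + 1 : ℝ), by positivity, hn⟩

lemma ofReal_exp_mul_mul_measure_le_expMoment (ν : Measure ℝ) {β : ℝ} (hβ : 0 ≤ β) (ε : ℝ) :
    ENNReal.ofReal (Real.exp (β * ε)) * ν {d | ε < d} ≤ expMoment ν β := by
  refine le_trans ?_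
    (mul_meas_ge_le_lintegral (measurable_ofReal_exp_mul β) (ENNReal.ofReal (Real.exp (β * ε))))
  refine mul_le_mul_right (measure_mono fun d (hd : ε < d) => ?_) _
  show ENNReal.ofReal (Real.exp (β * ε)) ≤ ENNReal.ofReal (Real.exp (β * d))
  gcongr

theorem exists_forall_ge_one_lt_expMoment {ν : Measure ℝ} (hν : 0 < ν {d | 0 < d}) :
    ∃ β₀ > 0, ∀ β ≥ β₀, 1 < expMoment ν β := by
  obtain ⟨ε, hε, hpos⟩ := exists_pos_measure_lt_of_measure_pos hν
  have htendsto : Tendsto (fun β : ℝ => ENNReal.ofReal (Real.exp (β * ε)) * ν {d | ε < d})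
      atTop (𝓝 ⊤) := by
    have h := ENNReal.Tendsto.mul_const (b := ν {d | ε < d}) (ENNReal.tendsto_ofReal_atTop.comp
      (Real.tendsto_exp_atTop.comp (tendsto_id.atTop_mul_const hε))) (Or.inl ENNReal.top_ne_zero)
    rwa [ENNReal.top_mul hpos.ne'] at h
  have hev : ∀ᶠ β in atTop, 0 < β ∧ 1 < expMoment ν β := by
    filter_upwards [eventually_gt_atTop 0, htendsto.eventually (lt_mem_nhds ENNReal.one_lt_top)]
      with β hβ hlt
    exact ⟨hβ, hlt.trans_le (ofReal_exp_mul_mul_measure_le_expMoment ν hβ.le ε)⟩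
  obtain ⟨β₀, hβ₀⟩ := eventually_atTop.1 hev
  exact ⟨β₀, (hβ₀ β₀ le_rfl).1, fun β hβ => (hβ₀ β hβ).2⟩

/-- **Proposition 3.2(iii).** (i) If `X ≥ 0` and `D` are independent and
`max(X + D, 0)` has the same law as `X`, then `E[e^{βD}] > 1` for some `β > 0` implies
`E[e^{βX}] = ∞`. (ii) Consequently, if `P{D > 0} > 0` and `π` is an invariant probability
measure for the reflected random walk kernel `x ↦ law of max(x + D, 0)`, then
`∫ e^{βx} π(dx) = ∞` for all sufficiently large `β`. -/
theorem reflected_rw_stationary_exponential_moments {Ω : Type*} [MeasureSpace Ω]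
    [IsProbabilityMeasure (ℙ : Measure Ω)]
    (D : Ω → ℝ) (hD : Measurable D) :
    (∀ X : Ω → ℝ, Measurable X → (∀ ω, 0 ≤ X ω) → IndepFun X D →
      Measure.map (fun ω => max (X ω + D ω) 0) ℙ = Measure.map X ℙ →
      ∀ β : ℝ, 0 < β → 1 < (∫⁻ ω, ENNReal.ofReal (Real.exp (β * D ω))) →
        (∫⁻ ω, ENNReal.ofReal (Real.exp (β * X ω))) = ⊤) ∧
    (0 < ℙ {ω | 0 < D ω} →
      ∀ π : Measure ℝ, IsProbabilityMeasure π →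
        Measure.map (fun p : ℝ × ℝ => max (p.1 + p.2) 0) (π.prod (Measure.map D ℙ)) = π →
        ∃ β₀ : ℝ, 0 < β₀ ∧ ∀ β : ℝ, β₀ ≤ β →
          (∫⁻ t, ENNReal.ofReal (Real.exp (β * t)) ∂π) = ⊤) := by
  refine ⟨fun X hX _ hindep hmap β hβ hD_moment => ?_, fun hD_pos π _ hinv => ?_⟩
  · have := Measure.isProbabilityMeasure_map (μ := ℙ) hX.aemeasurable
    have hinvX : ((Measure.map X ℙ).prod (Measure.map D ℙ)).map (fun p : ℝ × ℝ => max (p.1 + p.2) 0)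
        = Measure.map X ℙ := by
      rw [← hindep.map_prod_eq_prod_map_map hX.aemeasurable hD.aemeasurable,
        Measure.map_map (by fun_prop) (by fun_prop)]
      exact hmap
    rw [← expMoment_map hD] at hD_moment
    rw [← expMoment_map hX]
    exact expMoment_eq_top_of_map_max_add_prod_eq hinvX hβ.le hD_moment
  · obtain ⟨β₀, hβ₀, hlarge⟩ := exists_forall_ge_one_lt_expMoment (ν := Measure.map D ℙ) (by
      rwa [Measure.map_apply hD (s := {d | 0 < d}) measurableSet_Ioi])
    exact ⟨β₀, hβ₀, fun β hβ =>
      expMoment_eq_top_of_map_max_add_prod_eq hinv (hβ₀.trans_le hβ).le (hlarge β hβ)⟩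
end

section
/- Let (D(k))_{k≥1} be an i.i.d. sequence of real-valued random variables with δ := −E[D(1)] > 0, E[D(1)²] < ∞, and P{D(1) > 0} > 0, and let Φ be the reflected random walk Φ(k+1) = max(Φ(k) + D(k+1), 0) started at Φ(0) = 0. Then for every θ₀ > 0 and every Λ₀ ∈ ℝ, Σ_{n=0}^{∞} E[exp(θ₀ Σ_{k=0}^{n-1} Φ(k) − n Λ₀) · 1{Φ(n) = 0}] = ∞. -/
/-!
On an excursion of the walk of length `(1 + K) m` that climbs with increments in `[c, C]` for
`m` steps and then descends with increments `≤ -b` (where `K b ≥ C`), the walk returns to `0`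
while `∑ Φ(k) ≥ c m (m - 1) / 2`. Since `D(1)` charges both `(0, ∞)` and (having negative mean)
`(-∞, 0)`, such excursions have probability `ρ^m` for some `ρ > 0`, so the `(1 + K) m`-th term is
at least `exp(θ₀ c m (m - 1) / 2 - (1 + K) m Λ₀) ρ^m`, which is unbounded in `m`.
-/

open MeasureTheory ProbabilityTheory Filter Finset
open scoped ENNReal Topology

theorem sum_range_cast_id (m : ℕ) : ∑ k ∈ range m, (k : ℝ) = m * (m - 1) / 2 := by
  induction m with
  | zero => simp
  | succ m ih => rw [sum_range_succ, ih]; push_cast; ring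

section ReflectedWalk

variable {φ d : ℕ → ℝ}

theorem reflected_nonneg (hstep : ∀ k, φ (k + 1) = max (φ k + d (k + 1)) 0)
    (h0 : φ 0 = 0) (k : ℕ) : 0 ≤ φ k := by
  cases k with
  | zero => exact h0.ge
  | succ k => exact hstep k ▸ le_max_right _ _

theorem reflected_eq_sum_of_nonneg (hstep : ∀ k, φ (k + 1) = max (φ k + d (k + 1)) 0)
    (h0 : φ 0 = 0) {n : ℕ} (hd : ∀ i ∈ Ioc 0 n, 0 ≤ d i) :
    φ n = ∑ i ∈ Ioc 0 n, d i := by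
  induction n with
  | zero => simpa using h0
  | succ n ih =>
    have hn := ih fun i hi => hd i (Ioc_subset_Ioc_right n.le_succ hi)
    rw [hstep, sum_Ioc_succ_top n.zero_le, ← hn,
      max_eq_left (add_nonneg (reflected_nonneg hstep h0 n) (hd _ (by simp)))]

theorem reflected_le_max_sub (hstep : ∀ k, φ (k + 1) = max (φ k + d (k + 1)) 0)
    {b : ℝ} (hb : 0 ≤ b) {j k : ℕ}
    (hd : ∀ i ∈ Ioc j (j + k), d i ≤ -b) : φ (j + k) ≤ max (φ j - b * k) 0 := by
  induction k with
  | zero => simp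
  | succ k ih =>
    have hk := ih fun i hi => hd i (Ioc_subset_Ioc_right (by omega) hi)
    have hdk := hd (j + k + 1) (by simp)
    rw [← add_assoc, hstep]
    push_cast
    refine max_le ?_ (le_max_right _ _)
    rcases le_total 0 (φ j - b * k) with h | h
    · rw [max_eq_left h] at hk
      exact le_max_of_le_left (by linarith)
    · rw [max_eq_right h] at hk
      exact le_max_of_le_right (by linarith)

theorem reflected_excursion (hstep : ∀ k, φ (k + 1) = max (φ k + d (k + 1)) 0)
    (h0 : φ 0 = 0) {c C b : ℝ} {m r : ℕ} (hc : 0 ≤ c) (hb : 0 ≤ b)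
    (hCb : C * m ≤ b * r) (hup : ∀ i ∈ Ioc 0 m, d i ∈ Set.Icc c C)
    (hdown : ∀ i ∈ Ioc m (m + r), d i ≤ -b) :
    φ (m + r) = 0 ∧ c * (m * (m - 1) / 2) ≤ ∑ k ∈ range (m + r), φ k := by
  have hsum : ∀ k ≤ m, φ k = ∑ i ∈ Ioc 0 k, d i := fun k hk =>
    reflected_eq_sum_of_nonneg hstep h0 fun i hi =>
      hc.trans (hup i (Ioc_subset_Ioc_right hk hi)).1
  have hclimb : ∀ k ≤ m, c * k ≤ φ k := fun k hk => by
    simpa [hsum k hk, mul_comm] using card_nsmul_le_sum (Ioc 0 k) d c fun i hi =>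
      (hup i (Ioc_subset_Ioc_right hk hi)).1
  have hpeak : φ m ≤ C * m := by
    simpa [hsum m le_rfl, mul_comm] using
      sum_le_card_nsmul (Ioc 0 m) d C fun i hi => (hup i hi).2
  refine ⟨le_antisymm ?_ (reflected_nonneg hstep h0 _), ?_⟩
  · simpa [max_eq_right (show φ m - b * r ≤ 0 by linarith)] using
      reflected_le_max_sub hstep hb hdown
  · calc c * (m * (m - 1) / 2) = ∑ k ∈ range m, c * k := by rw [← mul_sum, sum_range_cast_id]
      _ ≤ ∑ k ∈ range m, φ k := sum_le_sum fun k hk => hclimb k (mem_range.1 hk).le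
      _ ≤ ∑ k ∈ range (m + r), φ k := sum_le_sum_of_subset_of_nonneg
          (range_subset_range.2 (m.le_add_right r)) fun k _ _ => reflected_nonneg hstep h0 k

end ReflectedWalk

theorem exists_measure_preimage_Icc_pos {α : Type*} [MeasurableSpace α] {μ : Measure α}
    {X : α → ℝ} (h : 0 < μ {ω | 0 < X ω}) : ∃ c C : ℝ, 0 < c ∧ 0 < μ (X ⁻¹' Set.Icc c C) := by
  have hcover : {ω | 0 < X ω} ⊆ ⋃ n : ℕ, X ⁻¹' Set.Icc ((n : ℝ) + 1)⁻¹ ((n : ℝ) + 1) := by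
    intro ω (hω : 0 < X ω)
    obtain ⟨n, hn⟩ := exists_nat_gt (max (X ω) (X ω)⁻¹)
    refine Set.mem_iUnion.2 ⟨n, inv_le_of_inv_le₀ hω ?_, ?_⟩ <;>
      linarith [le_max_left (X ω) (X ω)⁻¹, le_max_right (X ω) (X ω)⁻¹]
  obtain ⟨n, hn⟩ := exists_measure_pos_of_not_measure_iUnion_null
    (pos_iff_ne_zero.1 (h.trans_le (measure_mono hcover)))
  exact ⟨_, _, by positivity, hn⟩

theorem exists_measure_preimage_Iic_neg_pos {α : Type*} [MeasurableSpace α] {μ : Measure α}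
    {X : α → ℝ} (h : ∫ ω, X ω ∂μ < 0) : ∃ b : ℝ, 0 < b ∧ 0 < μ (X ⁻¹' Set.Iic (-b)) := by
  have hneg : 0 < μ {ω | 0 < -X ω} := by
    by_contra hzero
    have hae : ∀ᵐ ω ∂μ, 0 ≤ X ω :=
      measure_mono_null (fun ω (hω : ¬0 ≤ X ω) => show 0 < -X ω by linarith)
        (nonpos_iff_eq_zero.1 (not_lt.1 hzero))
    exact (integral_nonneg_of_ae hae).not_gt h
  obtain ⟨b, B, hb, hbB⟩ := exists_measure_preimage_Icc_pos hneg
  exact ⟨b, hb, hbB.trans_le (measure_mono fun ω hω => show X ω ≤ -b by linarith [hω.1])⟩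

theorem prod_Ioc_ite_le {M : Type*} [CommMonoid M] (x y : M) (m r : ℕ) :
    ∏ i ∈ Ioc 0 (m + r), (if i ≤ m then x else y) = x ^ m * y ^ r := by
  rw [← prod_Ioc_consecutive _ m.zero_le (m.le_add_right r),
    prod_congr rfl fun i hi => if_pos (mem_Ioc.1 hi).2,
    prod_congr rfl fun i hi => if_neg (mem_Ioc.1 hi).1.not_ge]
  simp

theorem measure_biInter_preimage_eq_prod {Ω ι β : Type*} [MeasurableSpace Ω]
    [MeasurableSpace β] {μ : Measure Ω} {X : ι → Ω → β} (hX : iIndepFun X μ) {j : ι}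
    (hident : ∀ i, IdentDistrib (X i) (X j) μ μ) {S : ι → Set β}
    (hS : ∀ i, MeasurableSet (S i)) (s : Finset ι) :
    μ (⋂ i ∈ s, X i ⁻¹' S i) = ∏ i ∈ s, μ (X j ⁻¹' S i) := by
  rw [hX.meas_biInter fun i _ => ⟨S i, hS i, rfl⟩]
  exact prod_congr rfl fun i _ => (hident i).measure_mem_eq (hS i)

section ExcursionEvent

variable {Ω : Type*} {D : ℕ → Ω → ℝ} {c C b : ℝ} {m r : ℕ}

def excursionEvent (D : ℕ → Ω → ℝ) (c C b : ℝ) (m r : ℕ) : Set Ω :=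
  ⋂ i ∈ Ioc 0 (m + r), D i ⁻¹' if i ≤ m then Set.Icc c C else Set.Iic (-b)

theorem reflected_of_mem_excursionEvent {Φ : ℕ → Ω → ℝ} (h0 : ∀ ω, Φ 0 ω = 0)
    (hstep : ∀ k ω, Φ (k + 1) ω = max (Φ k ω + D (k + 1) ω) 0) (hc : 0 ≤ c) (hb : 0 ≤ b)
    (hCb : C * m ≤ b * r) {ω : Ω} (hω : ω ∈ excursionEvent D c C b m r) :
    Φ (m + r) ω = 0 ∧ c * (m * (m - 1) / 2) ≤ ∑ k ∈ range (m + r), Φ k ω := by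
  have hmem := fun i hi => Set.mem_iInter₂.1 hω i hi
  refine reflected_excursion (φ := fun k => Φ k ω) (d := fun i => D i ω) (fun k => hstep k ω)
    (h0 ω) hc hb hCb (fun i hi => ?_) fun i hi => ?_
  · simpa [if_pos (mem_Ioc.1 hi).2] using hmem i (Ioc_subset_Ioc_right (m.le_add_right r) hi)
  · simpa [if_neg (mem_Ioc.1 hi).1.not_ge] using
      hmem i (Ioc_subset_Ioc_left m.zero_le hi)

variable [MeasurableSpace Ω] {μ : Measure Ω}

theorem measurableSet_excursionEvent (hD : ∀ i, Measurable (D i)) :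
    MeasurableSet (excursionEvent D c C b m r) :=
  measurableSet_biInter _ fun i _ => by split_ifs <;> exact hD i (by measurability)

theorem measure_excursionEvent (hD : iIndepFun D μ)
    (hident : ∀ i, IdentDistrib (D i) (D 1) μ μ) :
    μ (excursionEvent D c C b m r) =
      μ (D 1 ⁻¹' Set.Icc c C) ^ m * μ (D 1 ⁻¹' Set.Iic (-b)) ^ r := by
  rw [excursionEvent, measure_biInter_preimage_eq_prod hD hident
    (fun i => by split_ifs <;> measurability), ← prod_Ioc_ite_le]
  exact prod_congr rfl fun i _ => by split_ifs <;> rfl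

end ExcursionEvent

theorem ofReal_exp_mul_measure_le_lintegral {Ω : Type*} [MeasurableSpace Ω] {μ : Measure Ω}
    {Φ : ℕ → Ω → ℝ} {A : Set Ω} (hA : MeasurableSet A) {θ s Λ : ℝ} (hθ : 0 ≤ θ) {n : ℕ}
    (h : ∀ ω ∈ A, Φ n ω = 0 ∧ s ≤ ∑ k ∈ range n, Φ k ω) :
    ENNReal.ofReal (Real.exp (θ * s - n * Λ)) * μ A ≤
      ∫⁻ ω, Set.indicator {ω | Φ n ω = 0}
        (fun ω => ENNReal.ofReal (Real.exp (θ * (∑ k ∈ range n, Φ k ω) - n * Λ))) ω ∂μ := by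
  rw [← lintegral_indicator_const hA]
  refine lintegral_mono fun ω => ?_
  by_cases hω : ω ∈ A
  · obtain ⟨hzero, hsum⟩ := h ω hω
    rw [Set.indicator_of_mem hω, Set.indicator_of_mem (show ω ∈ {ω | Φ n ω = 0} from hzero)]
    gcongr
  · simp [Set.indicator_of_notMem hω]

theorem tendsto_ofReal_exp_mul_pow_atTop {α : ℝ} (hα : 0 < α) (β : ℝ) {ρ : ℝ≥0∞}
    (hρ0 : ρ ≠ 0) (hρ : ρ ≠ ∞) :
    Tendsto (fun m : ℕ => ENNReal.ofReal (Real.exp (α * (m * (m - 1)) - m * β)) * ρ ^ m)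
      atTop (𝓝 ∞) := by
  have hρpos : 0 < ρ.toReal := ENNReal.toReal_pos hρ0 hρ
  have hlin : Tendsto (fun m : ℕ => α * ((m : ℝ) - 1) - β + Real.log ρ.toReal) atTop atTop :=
    tendsto_atTop_add_const_right _ _ <| tendsto_atTop_add_const_right _ _ <|
      (tendsto_atTop_add_const_right _ _ tendsto_natCast_atTop_atTop).const_mul_atTop hα
  refine ENNReal.tendsto_ofReal_atTop.comp
    (Real.tendsto_exp_atTop.comp (tendsto_natCast_atTop_atTop.atTop_mul_atTop₀ hlin)) |>.congr
      fun m => ?_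
  rw [← ENNReal.ofReal_toReal (ENNReal.pow_ne_top hρ), ENNReal.toReal_pow,
    ← ENNReal.ofReal_mul (Real.exp_nonneg _), ← Real.exp_log (pow_pos hρpos m), ← Real.exp_add,
    Real.log_pow]
  simp only [Function.comp_apply]
  ring_nf

theorem reflected_rw_gpe_infinite_general {Ω : Type*} [MeasureSpace Ω]
    [IsProbabilityMeasure (ℙ : Measure Ω)]
    (D : ℕ → Ω → ℝ) (hDmeas : ∀ k, Measurable (D k))
    (hiid : iIndepFun D)
    (hident : ∀ k, IdentDistrib (D k) (D 1))
    (δ : ℝ) (hδ : 0 < δ) (hmean : (∫ ω, D 1 ω) = -δ)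
    (hpos : 0 < ℙ {ω | 0 < D 1 ω})
    (Φ : ℕ → Ω → ℝ) (hΦ0 : ∀ ω, Φ 0 ω = 0)
    (hΦstep : ∀ k ω, Φ (k + 1) ω = max (Φ k ω + D (k + 1) ω) 0) :
    ∀ θ₀ : ℝ, 0 < θ₀ → ∀ Λ₀ : ℝ,
      (∑' n : ℕ, ∫⁻ ω, Set.indicator {ω | Φ n ω = 0}
        (fun ω => ENNReal.ofReal
          (Real.exp (θ₀ * (∑ k ∈ Finset.range n, Φ k ω) - n * Λ₀))) ω) = ⊤ := by
  intro θ₀ hθ₀ Λ₀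
  obtain ⟨c, C, hc, hup⟩ := exists_measure_preimage_Icc_pos hpos
  obtain ⟨b, hb, hdown⟩ := exists_measure_preimage_Iic_neg_pos (hmean ▸ neg_neg_of_pos hδ)
  -- `K` down-steps of size at least `b` undo one up-step of size at most `C`.
  set K := ⌈C / b⌉₊
  have hCb : ∀ m : ℕ, C * m ≤ b * ↑(K * m) := fun m => by
    have hCbK : C ≤ b * K := (div_le_iff₀' hb).1 (Nat.le_ceil _)
    push_cast
    rw [← mul_assoc]
    exact mul_le_mul_of_nonneg_right hCbK m.cast_nonneg
  have hterm : ∀ m : ℕ,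
      ENNReal.ofReal (Real.exp (θ₀ * c / 2 * (m * (m - 1)) - m * ((1 + K) * Λ₀))) *
        (ℙ (D 1 ⁻¹' Set.Icc c C) * ℙ (D 1 ⁻¹' Set.Iic (-b)) ^ K) ^ m ≤
      ∫⁻ ω, Set.indicator {ω | Φ (m + K * m) ω = 0} (fun ω => ENNReal.ofReal
        (Real.exp (θ₀ * (∑ k ∈ Finset.range (m + K * m), Φ k ω) - ↑(m + K * m) * Λ₀))) ω := by
    intro m
    have := ofReal_exp_mul_measure_le_lintegral (μ := ℙ) (Λ := Λ₀)
      (measurableSet_excursionEvent hDmeas) hθ₀.le fun ω hω =>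
        reflected_of_mem_excursionEvent hΦ0 hΦstep hc.le hb.le (hCb m) hω
    rw [measure_excursionEvent hiid hident, pow_mul, ← mul_pow] at this
    convert this using 4
    push_cast
    ring
  refine top_unique (le_of_tendsto' (tendsto_ofReal_exp_mul_pow_atTop (by positivity) _ ?_ ?_)
    fun m => (hterm m).trans (ENNReal.le_tsum _))
  · exact mul_ne_zero hup.ne' (pow_ne_zero _ hdown.ne')
  · exact ENNReal.mul_ne_top (measure_ne_top _ _) (ENNReal.pow_ne_top (measure_ne_top _ _))

/-- **Proposition 3.2(iv).** For the reflected random walk driven by an i.i.d. sequence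
`(D k)` with `δ = −E[D] > 0`, `E[D²] < ∞` and `P{D > 0} > 0`, started at the origin,
for every `θ₀ > 0` and every `Λ₀ ∈ ℝ`,
`∑_n E[exp(θ₀ ∑_{k<n} Φ(k) − n Λ₀) 1{Φ(n) = 0}] = ∞`
(the generalized principal eigenvalue of the scaled kernel is infinite for positive
scaling parameters). -/
theorem reflected_rw_gpe_infinite {Ω : Type*} [MeasureSpace Ω]
    [IsProbabilityMeasure (ℙ : Measure Ω)]
    (D : ℕ → Ω → ℝ) (hDmeas : ∀ k, Measurable (D k))
    (hiid : iIndepFun D)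
    (hident : ∀ k, IdentDistrib (D k) (D 1))
    (δ : ℝ) (hδ : 0 < δ) (hDint : Integrable (D 1)) (hmean : (∫ ω, D 1 ω) = -δ)
    (hDsq : Integrable (fun ω => (D 1 ω) ^ 2))
    (hpos : 0 < ℙ {ω | 0 < D 1 ω})
    (Φ : ℕ → Ω → ℝ) (hΦ0 : ∀ ω, Φ 0 ω = 0)
    (hΦstep : ∀ k ω, Φ (k + 1) ω = max (Φ k ω + D (k + 1) ω) 0) :
    ∀ θ₀ : ℝ, 0 < θ₀ → ∀ Λ₀ : ℝ,
      (∑' n : ℕ, ∫⁻ ω, Set.indicator {ω | Φ n ω = 0}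
        (fun ω => ENNReal.ofReal
          (Real.exp (θ₀ * (∑ k ∈ Finset.range n, Φ k ω) - n * Λ₀))) ω) = ⊤ :=
  reflected_rw_gpe_infinite_general D hDmeas hiid hident δ hδ hmean hpos Φ hΦ0 hΦstep
end

section
/- Let X be a measurable space, P a Markov transition kernel on X, V : X → [0,∞) and W, G : X → [0,∞) measurable functions, C ⊆ X measurable, and constants b < ∞, κ < ∞ such that ∫ V(y) P(x,dy) + W(x) ≤ V(x) + b·1_C(x) and G(x) ≤ κ W(x) for all x ∈ X. Define the sub-Markov scaled kernel Q(x,·) := e^{−G(x)} P(x,·). Then for every n ≥ 1, every x ∈ X, and every measurable set A with P^n(x,A) > 0, Q^n(x,A) ≥ exp(−κ (V(x) + n b) / P^n(x,A)) · P^n(x,A). -/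
/-!
Along the chain, `Qⁿ(x, A) = E_x[e^{-Sₙ}; Φₙ ∈ A]` with `Sₙ = G(Φ₀) + ⋯ + G(Φₙ₋₁)`. Jensen's
inequality for `t ↦ e^{-t}` under `E_x[· | Φₙ ∈ A]` gives
`Qⁿ(x, A) ≥ Pⁿ(x, A) exp (-E_x[Sₙ; Φₙ ∈ A] / Pⁿ(x, A))`, and iterating the drift condition bounds
`E_x[Sₙ; Φₙ ∈ A] ≤ κ E_x[W(Φ₀) + ⋯ + W(Φₙ₋₁)] ≤ κ (V(x) + n b)`.
Without path measures, Jensen is applied one transition at a time: the perspective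
`(a, m) ↦ a e^{-m/a}` of `e^{-t}` is jointly convex, so `aₙ e^{-mₙ/aₙ} ≤ Qⁿ 1_A` propagates
by induction, where `aₙ = Pⁿ 1_A` and `mₙ = E_·[Sₙ; Φₙ ∈ A]`.
-/

open MeasureTheory ProbabilityTheory Filter
open scoped ENNReal

noncomputable def expNeg (t : ℝ≥0∞) : ℝ≥0∞ := EReal.exp (-(t : EReal))

@[simp] lemma expNeg_zero : expNeg 0 = 1 := by simp [expNeg]

@[simp] lemma expNeg_top : expNeg ∞ = 0 := by simp [expNeg]

lemma expNeg_ofReal {r : ℝ} (hr : 0 ≤ r) :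
    expNeg (ENNReal.ofReal r) = ENNReal.ofReal (Real.exp (-r)) := by
  rw [expNeg, EReal.coe_ennreal_ofReal, max_eq_left hr, ← EReal.coe_neg, EReal.exp_coe]

lemma expNeg_add (s t : ℝ≥0∞) : expNeg (s + t) = expNeg s * expNeg t := by
  rw [expNeg, EReal.coe_ennreal_add,
    EReal.neg_add (.inl (EReal.coe_ennreal_ne_bot _)) (.inr (EReal.coe_ennreal_ne_bot _)),
    sub_eq_add_neg, EReal.exp_add, expNeg, expNeg]

lemma expNeg_ofReal_le (r : ℝ) : expNeg (ENNReal.ofReal r) ≤ ENNReal.ofReal (Real.exp (-r)) := by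
  rcases le_total 0 r with hr | hr
  · exact (expNeg_ofReal hr).le
  · rw [ENNReal.ofReal_of_nonpos hr, expNeg_zero, ← ENNReal.ofReal_one]
    exact ENNReal.ofReal_le_ofReal (Real.one_le_exp (by linarith))

lemma expNeg_anti : Antitone expNeg := fun s t h => by
  simpa [expNeg] using EReal.coe_ennreal_le_coe_ennreal_iff.2 h

lemma expNeg_le_one (t : ℝ≥0∞) : expNeg t ≤ 1 := expNeg_zero ▸ expNeg_anti zero_le

lemma expNeg_ne_top (t : ℝ≥0∞) : expNeg t ≠ ∞ :=
  ne_top_of_le_ne_top ENNReal.one_ne_top (expNeg_le_one t)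

lemma expNeg_ne_zero {t : ℝ≥0∞} (ht : t ≠ ∞) : expNeg t ≠ 0 := by
  simp [expNeg, ht]

lemma exp_neg_tangent_le_perspective {A M c : ℝ} (hA : 0 < A) :
    Real.exp (-c) * ((1 + c) * A) ≤ A * Real.exp (-(M / A)) + Real.exp (-c) * M := by
  have htangent : Real.exp (-c) * (c - M / A + 1) ≤ Real.exp (-(M / A)) := by
    calc _ ≤ Real.exp (-c) * Real.exp (c - M / A) := by gcongr; exact Real.add_one_le_exp _
      _ = Real.exp (-(M / A)) := by rw [← Real.exp_add]; ring_nf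
  have := mul_le_mul_of_nonneg_left htangent hA.le
  field_simp at this ⊢
  linarith

lemma expNeg_tangent_le_perspective (a m : ℝ≥0∞) {c : ℝ≥0∞} (hc : c ≠ ∞) :
    expNeg c * ((1 + c) * a) ≤ a * expNeg (m / a) + expNeg c * m := by
  rcases eq_or_ne a 0 with rfl | ha0
  · simp
  rcases eq_or_ne a ∞ with rfl | ha
  · simp [ENNReal.div_top]
  rcases eq_or_ne m ∞ with rfl | hm
  · simp [ENNReal.mul_top (expNeg_ne_zero hc)]
  have hA : 0 < a.toReal := ENNReal.toReal_pos ha0 ha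
  rw [← ENNReal.ofReal_toReal ha, ← ENNReal.ofReal_toReal hm, ← ENNReal.ofReal_toReal hc,
    ← ENNReal.ofReal_div_of_pos hA, expNeg_ofReal ENNReal.toReal_nonneg,
    expNeg_ofReal (div_nonneg ENNReal.toReal_nonneg hA.le), ← ENNReal.ofReal_one,
    ← ENNReal.ofReal_add zero_le_one ENNReal.toReal_nonneg, ← ENNReal.ofReal_mul (by positivity),
    ← ENNReal.ofReal_mul (by positivity), ← ENNReal.ofReal_mul hA.le,
    ← ENNReal.ofReal_mul (by positivity), ← ENNReal.ofReal_add (by positivity) (by positivity)]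
  exact ENNReal.ofReal_le_ofReal (exp_neg_tangent_le_perspective hA)

/-- Jensen's inequality for the perspective of `e^{-t}`, obtained by integrating its supporting
line at `c = ∫ m / ∫ a`. -/
theorem le_lintegral_mul_expNeg_div {X : Type*} [MeasurableSpace X] {μ : Measure X}
    {a m : X → ℝ≥0∞} (hm : Measurable m) (ha : ∫⁻ y, a y ∂μ ≠ ∞) :
    (∫⁻ y, a y ∂μ) * expNeg ((∫⁻ y, m y ∂μ) / ∫⁻ y, a y ∂μ) ≤
      ∫⁻ y, a y * expNeg (m y / a y) ∂μ := by
  set s := ∫⁻ y, a y ∂μ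
  set t := ∫⁻ y, m y ∂μ
  rcases eq_or_ne s 0 with hs0 | hs0
  · simp [hs0]
  rcases eq_or_ne t ∞ with ht | ht
  · simp [ht, ENNReal.top_div_of_ne_top ha]
  set c := t / s
  have hc : c ≠ ∞ := ENNReal.div_ne_top ht hs0
  have hcs : c * s = t := ENNReal.div_mul_cancel hs0 ha
  have key : expNeg c * s + expNeg c * t ≤
      (∫⁻ y, a y * expNeg (m y / a y) ∂μ) + expNeg c * t :=
    calc expNeg c * s + expNeg c * t = ∫⁻ y, expNeg c * ((1 + c) * a y) ∂μ := by
          rw [lintegral_const_mul' _ _ (expNeg_ne_top c),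
            lintegral_const_mul' _ _ (ENNReal.add_ne_top.2 ⟨ENNReal.one_ne_top, hc⟩),
            add_mul, one_mul, hcs, mul_add]
      _ ≤ ∫⁻ y, a y * expNeg (m y / a y) + expNeg c * m y ∂μ :=
          lintegral_mono fun y => expNeg_tangent_le_perspective _ _ hc
      _ = (∫⁻ y, a y * expNeg (m y / a y) ∂μ) + expNeg c * t := by
          rw [lintegral_add_right _ (hm.const_mul _), lintegral_const_mul _ hm]
  rw [mul_comm]
  exact (ENNReal.add_le_add_iff_right (ENNReal.mul_ne_top (expNeg_ne_top c) ht)).1 key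

section Operators

variable {X : Type*} [MeasurableSpace X] (P : Kernel X X)

noncomputable def lintegralOp (g : X → ℝ≥0∞) (x : X) : ℝ≥0∞ := ∫⁻ y, g y ∂(P x)

noncomputable def scaledOp (G : X → ℝ) (g : X → ℝ≥0∞) (x : X) : ℝ≥0∞ :=
  ENNReal.ofReal (Real.exp (-G x)) * lintegralOp P g x

/-- `cumulativeCost P G g n x = E_x[(G⁺(Φ₀) + ⋯ + G⁺(Φₙ₋₁)) g(Φₙ)]` for the chain driven by `P`. -/
noncomputable def cumulativeCost (G : X → ℝ) (g : X → ℝ≥0∞) : ℕ → X → ℝ≥0∞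
  | 0 => 0
  | n + 1 => fun x =>
      ENNReal.ofReal (G x) * (lintegralOp P)^[n + 1] g x + lintegralOp P (cumulativeCost G g n) x

variable {P}

@[gcongr]
lemma lintegralOp_mono ⦃f g : X → ℝ≥0∞⦄ (h : ∀ y, f y ≤ g y) (x : X) :
    lintegralOp P f x ≤ lintegralOp P g x :=
  lintegral_mono h

lemma measurable_iterate_lintegralOp {g : X → ℝ≥0∞} (hg : Measurable g) (n : ℕ) :
    Measurable ((lintegralOp P)^[n] g) := by
  induction n with
  | zero => exact hg
  | succ n ih => rw [Function.iterate_succ']; exact ih.lintegral_kernel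

lemma iterate_lintegralOp_le_one [IsMarkovKernel P] {g : X → ℝ≥0∞} (hg : ∀ y, g y ≤ 1)
    (n : ℕ) (x : X) : (lintegralOp P)^[n] g x ≤ 1 := by
  induction n generalizing x with
  | zero => exact hg x
  | succ n ih =>
    rw [Function.iterate_succ_apply']
    exact (lintegralOp_mono ih x).trans (by simp [lintegralOp])

lemma measurable_cumulativeCost {G : X → ℝ} (hG : Measurable G) {g : X → ℝ≥0∞}
    (hg : Measurable g) (n : ℕ) : Measurable (cumulativeCost P G g n) := by
  induction n with
  | zero => exact measurable_const
  | succ n ih =>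
    exact (hG.ennreal_ofReal.mul (measurable_iterate_lintegralOp hg _)).add ih.lintegral_kernel

lemma iterate_lintegralOp_add_le_of_drift [IsMarkovKernel P] {v w : X → ℝ≥0∞} {β : ℝ≥0∞}
    (hdrift : ∀ x, lintegralOp P v x + w x ≤ v x + β) {m : ℕ → X → ℝ≥0∞}
    (hm : ∀ n, Measurable (m n)) (hm0 : ∀ x, m 0 x = 0)
    (hstep : ∀ n x, m (n + 1) x ≤ w x + lintegralOp P (m n) x) (n : ℕ) (x : X) :
    (lintegralOp P)^[n] v x + m n x ≤ v x + n * β := by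
  induction n generalizing x with
  | zero => simp [hm0]
  | succ n ih =>
    calc (lintegralOp P)^[n + 1] v x + m (n + 1) x
        ≤ lintegralOp P ((lintegralOp P)^[n] v) x + (w x + lintegralOp P (m n) x) := by
          rw [Function.iterate_succ_apply']; gcongr; exact hstep n x
      _ = lintegralOp P (fun y => (lintegralOp P)^[n] v y + m n y) x + w x := by
          simp only [lintegralOp]; rw [lintegral_add_right _ (hm n)]; ring
      _ ≤ lintegralOp P (fun y => v y + n * β) x + w x := by
          gcongr ?_ + _; exact lintegralOp_mono ih x
      _ = lintegralOp P v x + w x + n * β := by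
          simp only [lintegralOp]
          rw [lintegral_add_right _ measurable_const, lintegral_const, measure_univ, mul_one]; ring
      _ ≤ v x + β + n * β := by gcongr ?_ + _; exact hdrift x
      _ = v x + (n + 1 : ℕ) * β := by push_cast; ring

lemma cumulativeCost_le_of_drift [IsMarkovKernel P] {V W G : X → ℝ} (hV0 : ∀ x, 0 ≤ V x)
    {C : Set X} {b κ : ℝ} (hb : 0 ≤ b) (hκ : 0 ≤ κ)
    (hdrift : ∀ x, (∫⁻ y, ENNReal.ofReal (V y) ∂(P x)) + ENNReal.ofReal (W x) ≤
      ENNReal.ofReal (V x) + ENNReal.ofReal b * C.indicator 1 x)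
    (hGW : ∀ x, G x ≤ κ * W x) (hG : Measurable G) {g : X → ℝ≥0∞} (hg : Measurable g)
    (hg1 : ∀ y, g y ≤ 1) (n : ℕ) (x : X) :
    cumulativeCost P G g n x ≤ ENNReal.ofReal (κ * (V x + n * b)) := by
  set k := ENNReal.ofReal κ
  have hdrift' : ∀ x, lintegralOp P (fun y => k * ENNReal.ofReal (V y)) x +
      k * ENNReal.ofReal (W x) ≤ k * ENNReal.ofReal (V x) + k * ENNReal.ofReal b := by
    intro x
    rw [lintegralOp, lintegral_const_mul' _ _ ENNReal.ofReal_ne_top, ← mul_add, ← mul_add]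
    gcongr k * ?_
    refine (hdrift x).trans ?_
    gcongr
    by_cases hx : x ∈ C <;> simp [hx]
  have hstep : ∀ n x, cumulativeCost P G g (n + 1) x ≤
      k * ENNReal.ofReal (W x) + lintegralOp P (cumulativeCost P G g n) x := by
    intro n x
    rw [cumulativeCost, ← ENNReal.ofReal_mul hκ]
    gcongr ?_ + _
    calc ENNReal.ofReal (G x) * (lintegralOp P)^[n + 1] g x ≤ ENNReal.ofReal (G x) :=
          mul_le_of_le_one_right' (iterate_lintegralOp_le_one hg1 _ x)
      _ ≤ ENNReal.ofReal (κ * W x) := ENNReal.ofReal_le_ofReal (hGW x)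
  calc cumulativeCost P G g n x ≤ k * ENNReal.ofReal (V x) + n * (k * ENNReal.ofReal b) :=
        le_add_self.trans (iterate_lintegralOp_add_le_of_drift hdrift'
          (measurable_cumulativeCost hG hg) (fun _ => rfl) hstep n x)
    _ = ENNReal.ofReal (κ * (V x + n * b)) := by
        rw [ENNReal.ofReal_mul hκ, ENNReal.ofReal_add (hV0 x) (by positivity),
          ENNReal.ofReal_mul (Nat.cast_nonneg n), ENNReal.ofReal_natCast]
        ring

lemma iterate_mul_expNeg_cumulativeCost_div_le [IsMarkovKernel P] {G : X → ℝ}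
    (hG : Measurable G) {g : X → ℝ≥0∞} (hg : Measurable g) (hg1 : ∀ y, g y ≤ 1)
    (n : ℕ) (x : X) :
    (lintegralOp P)^[n] g x * expNeg (cumulativeCost P G g n x / (lintegralOp P)^[n] g x) ≤
      (scaledOp P G)^[n] g x := by
  induction n generalizing x with
  | zero => simp [cumulativeCost]
  | succ n ih =>
    set a := (lintegralOp P)^[n] g
    have ha : (lintegralOp P)^[n + 1] g x = lintegralOp P a x :=
      congrFun (Function.iterate_succ_apply' _ n g) x
    rw [ha]
    rcases eq_or_ne (lintegralOp P a x) 0 with h0 | h0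
    · simp [h0]
    have hfin : lintegralOp P a x ≠ ∞ :=
      ne_top_of_le_ne_top ENNReal.one_ne_top (ha ▸ iterate_lintegralOp_le_one hg1 (n + 1) x)
    have hsplit : cumulativeCost P G g (n + 1) x / lintegralOp P a x =
        ENNReal.ofReal (G x) + lintegralOp P (cumulativeCost P G g n) x / lintegralOp P a x := by
      rw [cumulativeCost]
      beta_reduce
      rw [ha, ENNReal.add_div, mul_div_assoc, ENNReal.div_self h0 hfin, mul_one]
    calc lintegralOp P a x * expNeg (cumulativeCost P G g (n + 1) x / lintegralOp P a x)
        ≤ ENNReal.ofReal (Real.exp (-G x)) * (lintegralOp P a x *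
            expNeg (lintegralOp P (cumulativeCost P G g n) x / lintegralOp P a x)) := by
          rw [hsplit, expNeg_add, mul_left_comm]; gcongr; exact expNeg_ofReal_le _
      _ ≤ ENNReal.ofReal (Real.exp (-G x)) *
            lintegralOp P (fun y => a y * expNeg (cumulativeCost P G g n y / a y)) x := by
          gcongr; exact le_lintegral_mul_expNeg_div (measurable_cumulativeCost hG hg n) hfin
      _ ≤ (scaledOp P G)^[n + 1] g x := by
          rw [Function.iterate_succ_apply', scaledOp]; gcongr; exact ih _

end Operators

theorem scaled_kernel_minorization_general {X : Type*} [MeasurableSpace X]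
    (P : Kernel X X) [IsMarkovKernel P]
    (V W G : X → ℝ) (hV0 : ∀ x, 0 ≤ V x)
    (hGm : Measurable G)
    (C : Set X) (b κ : ℝ) (hb : 0 ≤ b) (hκ : 0 ≤ κ)
    (hdrift : ∀ x, (∫⁻ y, ENNReal.ofReal (V y) ∂(P x)) + ENNReal.ofReal (W x) ≤
      ENNReal.ofReal (V x) + ENNReal.ofReal b * C.indicator 1 x)
    (hGW : ∀ x, G x ≤ κ * W x)
    (Pop Qop : (X → ℝ≥0∞) → X → ℝ≥0∞)
    (hPop : ∀ (g : X → ℝ≥0∞) (x : X), Pop g x = ∫⁻ y, g y ∂(P x))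
    (hQop : ∀ (g : X → ℝ≥0∞) (x : X),
      Qop g x = ENNReal.ofReal (Real.exp (-G x)) * ∫⁻ y, g y ∂(P x)) :
    ∀ n : ℕ, 1 ≤ n → ∀ x : X, ∀ A : Set X, MeasurableSet A →
      0 < Pop^[n] (A.indicator 1) x →
      ENNReal.ofReal (Real.exp (-(κ * (V x + n * b)) / (Pop^[n] (A.indicator 1) x).toReal))
          * Pop^[n] (A.indicator 1) x ≤ Qop^[n] (A.indicator 1) x := by
  obtain rfl : Pop = lintegralOp P := funext₂ hPop
  obtain rfl : Qop = scaledOp P G := funext₂ hQop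
  intro n _ x A hA hpos
  set a := (lintegralOp P)^[n] (A.indicator 1) x
  have hA1 : ∀ y, A.indicator (1 : X → ℝ≥0∞) y ≤ 1 := fun y => by
    by_cases hy : y ∈ A <;> simp [hy]
  have ha : a ≠ ∞ := ne_top_of_le_ne_top ENNReal.one_ne_top (iterate_lintegralOp_le_one hA1 n x)
  have hapos : 0 < a.toReal := ENNReal.toReal_pos hpos.ne' ha
  have hK : 0 ≤ κ * (V x + n * b) := by have := hV0 x; positivity
  calc ENNReal.ofReal (Real.exp (-(κ * (V x + n * b)) / a.toReal)) * a
      = a * expNeg (ENNReal.ofReal (κ * (V x + n * b)) / a) := by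
        rw [mul_comm, ← ENNReal.ofReal_toReal ha, ← ENNReal.ofReal_div_of_pos hapos,
          expNeg_ofReal (div_nonneg hK hapos.le), ENNReal.toReal_ofReal hapos.le, neg_div]
    _ ≤ a * expNeg (cumulativeCost P G (A.indicator 1) n x / a) := by
        refine mul_le_mul_right (expNeg_anti (ENNReal.div_le_div_right ?_ a)) a
        exact cumulativeCost_le_of_drift hV0 hb hκ hdrift hGW hGm
          (measurable_one.indicator hA) hA1 n x
    _ ≤ (scaledOp P G)^[n] (A.indicator 1) x :=
        iterate_mul_expNeg_cumulativeCost_div_le hGm (measurable_one.indicator hA) hA1 n x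

/-- **Jensen-inequality minorization bound (26)–(27)** used in the proof of
Proposition 2.5. Under the drift condition `PV + W ≤ V + b·1_C` and the domination
`G ≤ κ W`, the sub-Markov scaled kernel `Q = I_{e^{−G}} P` satisfies
`Q^n(x,A) ≥ exp(−κ(V(x) + nb)/P^n(x,A)) P^n(x,A)` whenever `P^n(x,A) > 0`.
Here the `n`-fold kernel iterates are represented by the `n`-fold iterates of the
associated operators on nonnegative functions, applied to the indicator of `A`. -/
theorem scaled_kernel_minorization {X : Type*} [MeasurableSpace X]
    (P : Kernel X X) [IsMarkovKernel P]
    (V W G : X → ℝ) (hV0 : ∀ x, 0 ≤ V x) (hW0 : ∀ x, 0 ≤ W x) (hG0 : ∀ x, 0 ≤ G x)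
    (hVm : Measurable V) (hWm : Measurable W) (hGm : Measurable G)
    (C : Set X) (hC : MeasurableSet C) (b κ : ℝ) (hb : 0 ≤ b) (hκ : 0 ≤ κ)
    (hdrift : ∀ x, (∫⁻ y, ENNReal.ofReal (V y) ∂(P x)) + ENNReal.ofReal (W x) ≤
      ENNReal.ofReal (V x) + ENNReal.ofReal b * C.indicator 1 x)
    (hGW : ∀ x, G x ≤ κ * W x)
    (Pop Qop : (X → ℝ≥0∞) → X → ℝ≥0∞)
    (hPop : ∀ (g : X → ℝ≥0∞) (x : X), Pop g x = ∫⁻ y, g y ∂(P x))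
    (hQop : ∀ (g : X → ℝ≥0∞) (x : X),
      Qop g x = ENNReal.ofReal (Real.exp (-G x)) * ∫⁻ y, g y ∂(P x)) :
    ∀ n : ℕ, 1 ≤ n → ∀ x : X, ∀ A : Set X, MeasurableSet A →
      0 < Pop^[n] (A.indicator 1) x →
      ENNReal.ofReal (Real.exp (-(κ * (V x + n * b)) / (Pop^[n] (A.indicator 1) x).toReal))
          * Pop^[n] (A.indicator 1) x ≤ Qop^[n] (A.indicator 1) x :=
  scaled_kernel_minorization_general P V W G hV0 hGm C b κ hb hκ hdrift hGW Pop Qop hPop hQop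
end

section
/- Let X be a measurable space, P a Markov transition kernel on X, f, s : X → [0,∞) measurable, v : X → [1,∞) measurable, and constants λ̄ > 0, b ≥ 0 such that f(x) ∫ v(y) P(x,dy) ≤ λ̄ v(x) + b s(x) for every x ∈ X. Then for every a ∈ [0,1] and every x ∈ X, f(x)^a ∫ v(y)^a P(x,dy) ≤ λ̄^a v(x)^a + a λ̄^{a−1} b s(x). -/
open MeasureTheory ProbabilityTheory
open scoped ENNReal

/-! Jensen's inequality for the concave map `t ↦ t ^ a` takes the power outside the integral,
so the left-hand side is at most `(λ̄ v(x) + b s(x)) ^ a`. The tangent line of `t ↦ t ^ a` at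
`λ̄ v(x)` bounds this by `(λ̄ v(x)) ^ a + a (λ̄ v(x)) ^ (a - 1) b s(x)`, and
`(λ̄ v(x)) ^ (a - 1) ≤ λ̄ ^ (a - 1)` since `v ≥ 1` and `a ≤ 1`. -/

namespace ENNReal

theorem rpow_le_rpow_of_nonpos {x y : ℝ≥0∞} {z : ℝ} (hxy : x ≤ y) (hz : z ≤ 0) :
    y ^ z ≤ x ^ z := by
  rw [← neg_neg z, rpow_neg y, rpow_neg x, ENNReal.inv_le_inv]
  exact rpow_le_rpow hxy (neg_nonneg.mpr hz)

theorem rpow_one_add_le_one_add_mul_self (x : ℝ≥0∞) {p : ℝ} (hp0 : 0 ≤ p) (hp1 : p ≤ 1) :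
    (1 + x) ^ p ≤ 1 + ENNReal.ofReal p * x := by
  rcases hp0.eq_or_lt with rfl | hp0'
  · simp
  induction x with
  | top => simp [top_rpow_of_pos hp0', hp0']
  | coe x =>
    rw [← coe_one, ← coe_add, ← coe_rpow_of_nonneg _ hp0, ENNReal.ofReal, ← coe_mul,
      ← coe_add, coe_le_coe, ← NNReal.coe_le_coe]
    push_cast
    rw [Real.coe_toNNReal _ hp0]
    exact _root_.rpow_one_add_le_one_add_mul_self (neg_one_lt_zero.trans_le x.coe_nonneg).le
      hp0 hp1

theorem add_rpow_le_rpow_add_mul_rpow_sub_one_mul (c w : ℝ≥0∞) {a : ℝ} (ha0 : 0 ≤ a)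
    (ha1 : a ≤ 1) :
    (c + w) ^ a ≤ c ^ a + ENNReal.ofReal a * c ^ (a - 1) * w := by
  rcases ha0.eq_or_lt with rfl | ha0'
  · simp
  rcases ha1.eq_or_lt with rfl | ha1'
  · simp
  rcases eq_or_ne w 0 with rfl | hw
  · simp
  rcases eq_or_ne c 0 with rfl | hc0
  -- the tangent at `0` is vertical: `0 ^ (a - 1) = ∞`
  · simp [zero_rpow_of_neg (sub_neg.mpr ha1'), ha0', hw]
  rcases eq_or_ne c ∞ with rfl | hc
  · simp [top_rpow_of_pos ha0']
  calc (c + w) ^ a = c ^ a * (1 + w / c) ^ a := by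
        rw [← mul_rpow_of_nonneg _ _ ha0, mul_add, mul_one, ENNReal.mul_div_cancel hc0 hc]
    _ ≤ c ^ a * (1 + ENNReal.ofReal a * (w / c)) :=
        mul_le_mul_right (rpow_one_add_le_one_add_mul_self _ ha0 ha1) _
    _ = c ^ a + ENNReal.ofReal a * c ^ (a - 1) * w := by
        rw [rpow_sub _ _ hc0 hc, rpow_one, div_eq_mul_inv, div_eq_mul_inv]
        ring

theorem lintegral_rpow_le_rpow_lintegral {α : Type*} [MeasurableSpace α] (μ : Measure α)
    [IsProbabilityMeasure μ] {g : α → ℝ≥0∞} (hg : AEMeasurable g μ) {a : ℝ} (ha0 : 0 ≤ a)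
    (ha1 : a ≤ 1) : ∫⁻ y, g y ^ a ∂μ ≤ (∫⁻ y, g y ∂μ) ^ a := by
  rcases ha0.eq_or_lt with rfl | ha0
  · simp
  -- monotonicity of `p ↦ ‖g‖_p` on a probability space, between `p = a` and `p = 1`
  have h := eLpNorm'_le_eLpNorm'_of_exponent_le ha0 ha1 μ hg.aestronglyMeasurable
  simp only [eLpNorm', enorm_eq_self, rpow_one, div_one, one_div] at h
  exact (rpow_inv_le_iff ha0).mp h

end ENNReal

theorem scaled_kernel_jensen_bound_general {X : Type*} [MeasurableSpace X]
    (P : Kernel X X) [IsMarkovKernel P]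
    (f s : X → ℝ≥0∞)
    (v : X → ℝ≥0∞) (hv1 : ∀ x, 1 ≤ v x) (hvm : Measurable v)
    (lam b : ℝ≥0∞)
    (hyp : ∀ x, f x * ∫⁻ y, v y ∂(P x) ≤ lam * v x + b * s x) :
    ∀ a : ℝ, a ∈ Set.Icc (0 : ℝ) 1 → ∀ x : X,
      (f x) ^ a * ∫⁻ y, (v y) ^ a ∂(P x) ≤
        lam ^ a * (v x) ^ a + ENNReal.ofReal a * lam ^ (a - 1) * b * s x := by
  rintro a ⟨ha0, ha1⟩ x
  calc f x ^ a * ∫⁻ y, v y ^ a ∂P x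
      ≤ f x ^ a * (∫⁻ y, v y ∂P x) ^ a :=
        mul_le_mul_right (ENNReal.lintegral_rpow_le_rpow_lintegral _ hvm.aemeasurable ha0 ha1) _
    _ = (f x * ∫⁻ y, v y ∂P x) ^ a := (ENNReal.mul_rpow_of_nonneg _ _ ha0).symm
    _ ≤ (lam * v x + b * s x) ^ a := ENNReal.rpow_le_rpow (hyp x) ha0
    _ ≤ (lam * v x) ^ a + ENNReal.ofReal a * (lam * v x) ^ (a - 1) * (b * s x) :=
        ENNReal.add_rpow_le_rpow_add_mul_rpow_sub_one_mul _ _ ha0 ha1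
    _ ≤ lam ^ a * v x ^ a + ENNReal.ofReal a * lam ^ (a - 1) * b * s x := by
        rw [ENNReal.mul_rpow_of_nonneg _ _ ha0, ← mul_assoc]
        gcongr _ + ENNReal.ofReal a * ?_ * b * s x
        exact ENNReal.rpow_le_rpow_of_nonpos (le_mul_of_one_le_right' (hv1 x)) (sub_nonpos.mpr ha1)

/-- **Jensen bound in the proof of Theorem 2.4.** If the scaled kernel satisfies
`P_f v ≤ λ̄ v + b s`, i.e. `f(x) ∫ v dP(x,·) ≤ λ̄ v(x) + b s(x)` for all `x`, then for
every `a ∈ [0,1]`, `f(x)^a ∫ v^a dP(x,·) ≤ λ̄^a v(x)^a + a λ̄^{a−1} b s(x)`. -/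
theorem scaled_kernel_jensen_bound {X : Type*} [MeasurableSpace X]
    (P : Kernel X X) [IsMarkovKernel P]
    (f s : X → ℝ≥0∞) (hf : ∀ x, f x ≠ ∞) (hs : ∀ x, s x ≠ ∞)
    (hfm : Measurable f) (hsm : Measurable s)
    (v : X → ℝ≥0∞) (hv1 : ∀ x, 1 ≤ v x) (hvm : Measurable v)
    (lam b : ℝ≥0∞) (hlam0 : lam ≠ 0) (hlamtop : lam ≠ ∞) (hb : b ≠ ∞)
    (hyp : ∀ x, f x * ∫⁻ y, v y ∂(P x) ≤ lam * v x + b * s x) :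
    ∀ a : ℝ, a ∈ Set.Icc (0 : ℝ) 1 → ∀ x : X,
      (f x) ^ a * ∫⁻ y, (v y) ^ a ∂(P x) ≤
        lam ^ a * (v x) ^ a + ENNReal.ofReal a * lam ^ (a - 1) * b * s x :=
  scaled_kernel_jensen_bound_general P f s v hv1 hvm lam b hyp
end

section
/- Let D be a real-valued random variable with δ := −E[D] > 0, E[D²] < ∞, and P{D > 0} > 0, and let π be an invariant probability measure for the reflected random walk kernel x ↦ law of max(x + D, 0) on [0,∞), satisfying ∫ x π(dx) < ∞. Define V(x) := 1 + (2δ)⁻¹(x² + δx) and H(x) := V(x) − E[V(max(x + D, 0))]. Then H is π-integrable and ∫ H(x) π(dx) = 0; equivalently, ∫ x π(dx) = ∫ R(x) π(dx), where R(x) := x − H(x) is the bounded function from the drift identity E[V(max(x+D,0))] = V(x) − x + R(x). -/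
open MeasureTheory ProbabilityTheory Filter Topology

/-!
Write `T(x, y) = max (x + y) 0` and `ρ = π ⊗ law(D)`. Invariance says that `V ∘ T` and
`V ∘ Prod.fst` have the same law under `ρ`, so their difference has `ρ`-mean zero as soon as it is
`ρ`-integrable, whether or not `V` itself is: the truncations `max (min V n) (-n)` of the two have
equal means, and dominated convergence lets `n → ∞`. Since `π` lives on `[0, ∞)`, the difference
`V(x) - V(T(x, y))` is bounded by a multiple of `x |y| + |y| + y²`, which is `ρ`-integrable under
a first moment of `π` and a second moment of `D`. Fubini turns its `ρ`-mean into `π(H)`.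
-/

theorem integral_sub_eq_zero_of_identDistrib {α : Type*} [MeasurableSpace α] {μ : Measure α}
    [IsFiniteMeasure μ] {f g : α → ℝ} (hfg : IdentDistrib f g μ μ)
    (hint : Integrable (fun x => f x - g x) μ) : ∫ x, (f x - g x) ∂μ = 0 := by
  let c : ℕ → ℝ → ℝ := fun n t => max (min t n) (-n)
  have hc_cont : ∀ n, Continuous (c n) := fun n =>
    (continuous_id.min continuous_const).max continuous_const
  have hc_bound : ∀ n t, ‖c n t‖ ≤ n := fun n t => by
    simp only [c, Real.norm_eq_abs, abs_le]
    constructor <;> cases max_cases (min t n) (-n) <;> cases min_cases t n <;> linarith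
  have hc_lip : ∀ n a b, |c n a - c n b| ≤ |a - b| := fun n a b =>
    (abs_max_sub_max_le_abs _ _ _).trans ((abs_min_sub_min_le_max _ _ _ _).trans (by simp))
  have hc_eventually : ∀ t, ∀ᶠ n : ℕ in atTop, c n t = t := fun t => by
    filter_upwards [eventually_ge_atTop ⌈|t|⌉₊] with n hn
    have ht := abs_le.mp ((Nat.le_ceil |t|).trans (Nat.cast_le.mpr hn))
    simp only [c, min_eq_left ht.2, max_eq_left ht.1]
  have hc_integrable : ∀ n {h : α → ℝ}, AEMeasurable h μ → Integrable (fun x => c n (h x)) μ :=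
    fun n _ hh => .of_bound ((hc_cont n).comp_aestronglyMeasurable hh.aestronglyMeasurable) n
      (ae_of_all _ fun _ => hc_bound n _)
  have h_trunc : ∀ n, ∫ x, (c n (f x) - c n (g x)) ∂μ = 0 := fun n => by
    rw [integral_sub (hc_integrable n hfg.aemeasurable_fst) (hc_integrable n hfg.aemeasurable_snd),
      sub_eq_zero]
    exact (hfg.comp (hc_cont n).measurable).integral_eq
  have h_lim : Tendsto (fun n : ℕ => ∫ x, (c n (f x) - c n (g x)) ∂μ) atTop
      (𝓝 (∫ x, (f x - g x) ∂μ)) :=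
    tendsto_integral_of_dominated_convergence (fun x => |f x - g x|)
      (fun n => (hc_integrable n hfg.aemeasurable_fst).sub
        (hc_integrable n hfg.aemeasurable_snd) |>.aestronglyMeasurable)
      hint.abs (fun n => ae_of_all _ fun _ => hc_lip n _ _)
      (ae_of_all _ fun x => tendsto_const_nhds.congr' <|
        (hc_eventually (f x)).mp <| (hc_eventually (g x)).mono fun _ hg hf => by
          simp only [hf, hg])
  simp only [h_trunc] at h_lim
  exact tendsto_nhds_unique h_lim tendsto_const_nhds

theorem integrable_sub_integral_comp_and_integral_eq_zero {α β : Type*} [MeasurableSpace α]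
    [MeasurableSpace β] {π : Measure α} {ν : Measure β} [IsProbabilityMeasure π]
    [IsProbabilityMeasure ν] {T : α × β → α} (hπ : (π.prod ν).map T = π) {u : α → ℝ}
    (hu : Measurable u) (hint : Integrable (fun p => u p.1 - u (T p)) (π.prod ν)) :
    Integrable (fun x => u x - ∫ y, u (T (x, y)) ∂ν) π ∧
      ∫ x, (u x - ∫ y, u (T (x, y)) ∂ν) ∂π = 0 := by
  have hT : AEMeasurable T (π.prod ν) :=
    .of_map_ne_zero (by rw [hπ]; exact IsProbabilityMeasure.ne_zero π)
  have hident : IdentDistrib Prod.fst T (π.prod ν) (π.prod ν) :=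
    ⟨measurable_fst.aemeasurable, hT, by rw [hπ, Measure.map_fst_prod, measure_univ, one_smul]⟩
  have hfiber : (fun x => ∫ y, (u x - u (T (x, y))) ∂ν) =ᵐ[π]
      fun x => u x - ∫ y, u (T (x, y)) ∂ν := by
    filter_upwards [hint.prod_right_ae] with x hx
    have hPu : Integrable (fun y => u (T (x, y))) ν :=
      ((integrable_const (u x)).sub hx).congr (ae_of_all _ fun _ => sub_sub_cancel _ _)
    rw [integral_sub (integrable_const _) hPu, integral_const, probReal_univ, one_smul]
  refine ⟨hint.integral_prod_left.congr hfiber, ?_⟩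
  rw [← integral_congr_ae hfiber, ← integral_prod _ hint]
  exact integral_sub_eq_zero_of_identDistrib (hident.comp hu) hint

theorem ae_nonneg_of_map_max_eq {α : Type*} [MeasurableSpace α] {μ : Measure α}
    {π : Measure ℝ} {f : α → ℝ} (h : μ.map (fun a => max (f a) 0) = π) : ∀ᵐ x ∂π, 0 ≤ x := by
  subst h
  by_cases hf : AEMeasurable (fun a => max (f a) 0) μ
  · exact (ae_map_iff hf measurableSet_Ici).2 (ae_of_all _ fun _ => le_max_right _ _)
  · simp [Measure.map_of_not_aemeasurable hf]

theorem abs_max_add_sub_le {x : ℝ} (hx : 0 ≤ x) (y : ℝ) : |max (x + y) 0 - x| ≤ |y| := by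
  simpa [max_eq_left hx] using abs_max_sub_max_le_abs (x + y) x 0

theorem abs_max_add_sq_sub_sq_le {x : ℝ} (hx : 0 ≤ x) (y : ℝ) :
    |max (x + y) 0 ^ 2 - x ^ 2| ≤ 2 * x * |y| + y ^ 2 := by
  rcases le_or_gt 0 (x + y) with hxy | hxy
  · rw [max_eq_left hxy, show (x + y) ^ 2 - x ^ 2 = 2 * x * y + y ^ 2 by ring]
    exact (abs_add_le _ _).trans (by simp [abs_mul, abs_of_nonneg hx])
  · have hxy' : x ≤ |y| := by linarith [neg_le_abs y]
    rw [max_eq_right hxy.le, abs_of_nonpos (by nlinarith)]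
    nlinarith [abs_nonneg y]

section ReflectedStep

variable {π ν : Measure ℝ} [IsProbabilityMeasure π] [IsProbabilityMeasure ν]

theorem integrable_max_add_sub (hπ₀ : ∀ᵐ x ∂π, 0 ≤ x) (hν : Integrable (fun y => y) ν) :
    Integrable (fun p : ℝ × ℝ => max (p.1 + p.2) 0 - p.1) (π.prod ν) :=
  (hν.abs.comp_snd π).mono' (by fun_prop) <|
    (ae_of_ae_map measurable_fst.aemeasurable (by simpa using hπ₀)).mono fun p hp =>
      abs_max_add_sub_le hp p.2

theorem integrable_max_add_sq_sub_sq (hπ₀ : ∀ᵐ x ∂π, 0 ≤ x) (hπ : Integrable (fun x => x) π)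
    (hν : Integrable (fun y => y) ν) (hν₂ : Integrable (fun y => y ^ 2) ν) :
    Integrable (fun p : ℝ × ℝ => max (p.1 + p.2) 0 ^ 2 - p.1 ^ 2) (π.prod ν) :=
  (((hπ.const_mul 2).mul_prod hν.abs).add (hν₂.comp_snd π)).mono' (by fun_prop) <|
    (ae_of_ae_map measurable_fst.aemeasurable (by simpa using hπ₀)).mono fun p hp =>
      abs_max_add_sq_sub_sq_le hp p.2

end ReflectedStep

theorem control_variate_mean_zero_general {Ω : Type*} [MeasureSpace Ω]
    [IsProbabilityMeasure (ℙ : Measure Ω)]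
    (D : Ω → ℝ) (hDint : Integrable D)
    (δ : ℝ)
    (hDsq : Integrable (fun ω => (D ω) ^ 2))
    (π : Measure ℝ) (hπprob : IsProbabilityMeasure π)
    (hπinv : Measure.map (fun p : ℝ × ℝ => max (p.1 + p.2) 0)
      (π.prod (Measure.map D ℙ)) = π)
    (hπint : Integrable (fun t : ℝ => t) π)
    (V H : ℝ → ℝ) (hV : ∀ x, V x = 1 + (2 * δ)⁻¹ * (x ^ 2 + δ * x))
    (hH : ∀ x, H x = V x - ∫ ω, V (max (x + D ω) 0)) :
    Integrable H π ∧ (∫ x, H x ∂π) = 0 ∧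
      (∫ t, t ∂π) = ∫ t, (t - H t) ∂π := by
  have hDm := hDint.aemeasurable
  have : IsProbabilityMeasure (Measure.map D ℙ) := Measure.isProbabilityMeasure_map hDm
  have hν : Integrable (fun y => y) (Measure.map D ℙ) :=
    (integrable_map_measure (by fun_prop) hDm).2 hDint
  have hν₂ : Integrable (fun y => y ^ 2) (Measure.map D ℙ) :=
    (integrable_map_measure (by fun_prop) hDm).2 hDsq
  have hVm : Measurable V := by rw [funext hV]; fun_prop
  have hH_eq : H = fun x => V x - ∫ y, V (max (x + y) 0) ∂(Measure.map D ℙ) := funext fun x => by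
    rw [hH, integral_map (f := fun y => V (max (x + y) 0)) hDm
      (hVm.comp (by fun_prop)).aestronglyMeasurable]
  have hπ₀ := ae_nonneg_of_map_max_eq hπinv
  have hdrift : Integrable (fun p : ℝ × ℝ => V p.1 - V (max (p.1 + p.2) 0))
      (π.prod (Measure.map D ℙ)) :=
    (((integrable_max_add_sq_sub_sq hπ₀ hπint hν hν₂).add
      ((integrable_max_add_sub hπ₀ hν).const_mul δ)).const_mul (-(2 * δ)⁻¹)).congr
      (ae_of_all _ fun p => by simp only [Pi.add_apply, hV]; ring)
  obtain ⟨hHint, hH₀⟩ := integrable_sub_integral_comp_and_integral_eq_zero hπinv hVm hdrift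
  rw [← hH_eq] at hHint hH₀
  exact ⟨hHint, hH₀, by rw [integral_sub hπint hHint, hH₀, sub_zero]⟩

/-- **Section 3.2: `π(H) = 0` for the control variate `H = V − PV`.** For the reflected
random walk with increment `D` (`δ = −E[D] > 0`, `E[D²] < ∞`, `P{D > 0} > 0`) and an
invariant probability measure `π` with finite mean, the function
`H(x) = V(x) − E[V(max(x+D,0))]`, with `V(x) = 1 + (2δ)⁻¹(x² + δx)`, is `π`-integrable
with `∫ H dπ = 0`; equivalently `∫ x π(dx) = ∫ (x − H(x)) π(dx)`. -/
theorem control_variate_mean_zero {Ω : Type*} [MeasureSpace Ω]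
    [IsProbabilityMeasure (ℙ : Measure Ω)]
    (D : Ω → ℝ) (hD : Measurable D) (hDint : Integrable D)
    (δ : ℝ) (hδ : 0 < δ) (hmean : (∫ ω, D ω) = -δ)
    (hDsq : Integrable (fun ω => (D ω) ^ 2))
    (hpos : 0 < ℙ {ω | 0 < D ω})
    (π : Measure ℝ) (hπprob : IsProbabilityMeasure π)
    (hπinv : Measure.map (fun p : ℝ × ℝ => max (p.1 + p.2) 0)
      (π.prod (Measure.map D ℙ)) = π)
    (hπint : Integrable (fun t : ℝ => t) π)
    (V H : ℝ → ℝ) (hV : ∀ x, V x = 1 + (2 * δ)⁻¹ * (x ^ 2 + δ * x))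
    (hH : ∀ x, H x = V x - ∫ ω, V (max (x + D ω) 0)) :
    Integrable H π ∧ (∫ x, H x ∂π) = 0 ∧
      (∫ t, t ∂π) = ∫ t, (t - H t) ∂π :=
  control_variate_mean_zero_general D hDint δ hDsq π hπprob hπinv hπint V H hV hH
end
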